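/- arXiv:nlin/0107050 — 12 statements merged into one kernel-verified Lean document; each statement's English description precedes it below -/
import Mathlib

section
/- Let q be a complex number with 0 < |q| < 1 and let x be a nonzero complex number. Define polynomials p_k^{(b)}(y|q) by the generating function ∑_{k≥0} p_k^{(b)} λ^k = (q^{1/4}bλ, q^{3/4}bλ; q)_∞ / (−q^{1/4}xλ, −q^{3/4}x^{−1}λ; q)_∞, where y = −(1/2)(q^{−1/4}x + q^{1/4}x^{−1}). Then each p_k^{(b)} is indeed a polynomial in y (i.e., the coefficient of λ^k depends on x only through the combination y). -/
noncomputable section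

/-- `p : ℤ → ℂ` is the coefficient sequence of the generating function
`(q^{1/4}bλ, q^{3/4}bλ; q)_∞ / (−q^{1/4}xλ, −q^{3/4}x⁻¹λ; q)_∞` (with `s = q^{1/4}`),
characterized by `p 0 = 1`, `p k = 0` for `k < 0`, and the coefficientwise form of the
functional equation `(1+sxλ)(1+s³x⁻¹λ)F(λ) = (1−sbλ)(1−s³bλ)F(qλ)`. -/
def IsPCoeff (s x b : ℂ) (p : ℤ → ℂ) : Prop :=
  (∀ k : ℤ, k < 0 → p k = 0) ∧ p 0 = 1 ∧
  ∀ k : ℤ,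
    p k + (s * x + s ^ 3 * x⁻¹) * p (k - 1) + s ^ 4 * p (k - 2)
      = (s ^ 4) ^ k * p k - (s * b + s ^ 3 * b) * (s ^ 4) ^ (k - 1) * p (k - 1)
        + s ^ 4 * b ^ 2 * (s ^ 4) ^ (k - 2) * p (k - 2)

/-- `Q : ℤ → ℂ` is the coefficient sequence of the generating function
`(−q^{1/4}xλ, −q^{3/4}x⁻¹λ; q)_∞ / (q^{1/4}b⁻¹λ, q^{3/4}b⁻¹λ; q)_∞` (with `s = q^{1/4}`),
via the functional equation `(1−sb⁻¹λ)(1−s³b⁻¹λ)G(λ) = (1+sxλ)(1+s³x⁻¹λ)G(qλ)`. -/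
def IsQCoeff (s x b : ℂ) (Q : ℤ → ℂ) : Prop :=
  (∀ k : ℤ, k < 0 → Q k = 0) ∧ Q 0 = 1 ∧
  ∀ k : ℤ,
    Q k - (s * b⁻¹ + s ^ 3 * b⁻¹) * Q (k - 1) + s ^ 4 * (b⁻¹) ^ 2 * Q (k - 2)
      = (s ^ 4) ^ k * Q k + (s * x + s ^ 3 * x⁻¹) * (s ^ 4) ^ (k - 1) * Q (k - 1)
        + s ^ 4 * (s ^ 4) ^ (k - 2) * Q (k - 2)

/-- `Qt : ℤ → ℂ` is the coefficient sequence of the generating function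
`(−q^{1/4}b⁻¹λ, −q^{3/4}b⁻¹λ; q)_∞ / (q^{1/4}xλ, q^{3/4}x⁻¹λ; q)_∞` (with `s = q^{1/4}`),
via the functional equation `(1−sxλ)(1−s³x⁻¹λ)G̃(λ) = (1+sb⁻¹λ)(1+s³b⁻¹λ)G̃(qλ)`. -/
def IsQtCoeff (s x b : ℂ) (Qt : ℤ → ℂ) : Prop :=
  (∀ k : ℤ, k < 0 → Qt k = 0) ∧ Qt 0 = 1 ∧
  ∀ k : ℤ,
    Qt k - (s * x + s ^ 3 * x⁻¹) * Qt (k - 1) + s ^ 4 * Qt (k - 2)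
      = (s ^ 4) ^ k * Qt k + (s * b⁻¹ + s ^ 3 * b⁻¹) * (s ^ 4) ^ (k - 1) * Qt (k - 1)
        + s ^ 4 * (b⁻¹) ^ 2 * (s ^ 4) ^ (k - 2) * Qt (k - 2)



open Polynomial in
/-- One step of the recursion defining the polynomials `P k`. -/
noncomputable def Pstep (s b : ℂ) (k : ℤ) (p0 p1 : Polynomial ℂ) : Polynomial ℂ :=
  C (1 - (s ^ 4) ^ k)⁻¹ *
    ((C (2 * s ^ 2) * X - C ((s * b + s ^ 3 * b) * (s ^ 4) ^ (k - 1))) * p1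
      + C (s ^ 4 * b ^ 2 * (s ^ 4) ^ (k - 2) - s ^ 4) * p0)

/-- Pair `(P (n-1), P n)` for natural `n`. -/
noncomputable def Pnat (s b : ℂ) : ℕ → Polynomial ℂ × Polynomial ℂ
  | 0 => (0, 1)
  | n + 1 => ((Pnat s b n).2, Pstep s b ((n : ℤ) + 1) (Pnat s b n).1 (Pnat s b n).2)

/-- The polynomials indexed by `ℤ`. -/
noncomputable def Pint (s b : ℂ) (k : ℤ) : Polynomial ℂ :=
  if k < 0 then 0 else (Pnat s b k.toNat).2

lemma Pint_natCast (s b : ℂ) (n : ℕ) : Pint s b (n : ℤ) = (Pnat s b n).2 := by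
  simp [Pint]

lemma Pnat_fst (s b : ℂ) (n : ℕ) : (Pnat s b n).1 = Pint s b ((n : ℤ) - 1) := by
  cases n with
  | zero => simp [Pnat, Pint]
  | succ m =>
    have : ((m : ℤ) + 1) - 1 = (m : ℤ) := by ring
    simp [Pnat, Pint_natCast]

/-- Each coefficient `p_k^{(b)}` of the generating function is a polynomial in
`y = −(1/2)(q^{−1/4}x + q^{1/4}x⁻¹)`: it depends on `x` only through `y`. -/
theorem pCoeff_is_polynomial_in_y (s b : ℂ) (hs : s ≠ 0)
    (habs : ‖s ^ 4‖ < 1) :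
    ∃ P : ℤ → Polynomial ℂ, ∀ x : ℂ, x ≠ 0 → ∀ p : ℤ → ℂ, IsPCoeff s x b p →
      ∀ k : ℤ, p k = (P k).eval (-(1 / 2) * (s⁻¹ * x + s * x⁻¹)) := by
  classical
  refine ⟨Pint s b, ?_⟩
  intro x hx p hp
  obtain ⟨h1, h0, hrec⟩ := hp
  have hq : (s : ℂ) ^ 4 ≠ 0 := pow_ne_zero _ hs
  rw [show (∀ k : ℤ, p k = (Pint s b k).eval (-(1 / 2) * (s⁻¹ * x + s * x⁻¹))) ↔
      ∃ y, y = -(1 / 2) * (s⁻¹ * x + s * x⁻¹) ∧ ∀ k : ℤ, p k = (Pint s b k).eval y from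
    ⟨fun h => ⟨_, rfl, h⟩, fun ⟨y, hy, h⟩ => hy ▸ h⟩]
  obtain ⟨y, hy⟩ : ∃ y : ℂ, y = -(1 / 2) * (s⁻¹ * x + s * x⁻¹) := ⟨_, rfl⟩
  refine ⟨y, hy, ?_⟩
  have h2y : 2 * s ^ 2 * y = -(s * x + s ^ 3 * x⁻¹) := by
    rw [hy]; field_simp
  have key : ∀ n : ℕ, p (n : ℤ) = (Pint s b (n : ℤ)).eval y := by
    intro n
    induction n using Nat.strong_induction_on with
    | _ n ih =>
      match n with
      | 0 =>
        show p 0 = _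
        simp [Pint, Pnat, h0]
      | Nat.succ m =>
        have hpm : p (m : ℤ) = (Pint s b (m : ℤ)).eval y := ih m (Nat.lt_succ_self m)
        have hpm1 : p ((m : ℤ) - 1) = (Pint s b ((m : ℤ) - 1)).eval y := by
          cases m with
          | zero =>
            have : ((0 : ℕ) : ℤ) - 1 = -1 := by norm_num
            rw [this, h1 _ (by norm_num)]
            simp [Pint]
          | succ j =>
            have : ((j + 1 : ℕ) : ℤ) - 1 = (j : ℤ) := by push_cast; ring
            rw [this]; exact ih j (by omega)
        have hne : (1 : ℂ) - (s ^ 4) ^ ((m : ℤ) + 1) ≠ 0 := by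
          intro h
          have h' : (s ^ 4) ^ ((m : ℤ) + 1) = 1 := by
            have := sub_eq_zero.mp h; exact this.symm
          have hcast : ((m : ℤ) + 1) = ((m + 1 : ℕ) : ℤ) := by push_cast; ring
          rw [hcast, zpow_natCast] at h'
          have habs' : ‖(s ^ 4) ^ (m + 1)‖ < 1 := by
            rw [norm_pow]
            exact pow_lt_one₀ (norm_nonneg _) habs (Nat.succ_ne_zero m)
          rw [h'] at habs'; simp at habs'
        have heq := hrec ((m : ℤ) + 1)
        have e1 : ((m : ℤ) + 1) - 1 = (m : ℤ) := by ring
        have e2 : ((m : ℤ) + 1) - 2 = (m : ℤ) - 1 := by ring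
        rw [e1, e2] at heq
        have hcast : ((m + 1 : ℕ) : ℤ) = (m : ℤ) + 1 := by push_cast; ring
        have hPval : (Pint s b ((m : ℤ) + 1)).eval y
            = (1 - (s ^ 4) ^ ((m : ℤ) + 1))⁻¹ *
              ((2 * s ^ 2 * y - (s * b + s ^ 3 * b) * (s ^ 4) ^ ((m : ℤ) + 1 - 1))
                  * (Pint s b (m : ℤ)).eval y
                + (s ^ 4 * b ^ 2 * (s ^ 4) ^ ((m : ℤ) + 1 - 2) - s ^ 4)
                  * (Pint s b ((m : ℤ) - 1)).eval y) := by
          rw [← hcast, Pint_natCast]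
          show (Pstep s b ((m : ℤ) + 1) (Pnat s b m).1 (Pnat s b m).2).eval y = _
          rw [Pnat_fst, ← Pint_natCast, Pstep]
          rw [hcast]
          simp only [Polynomial.eval_mul, Polynomial.eval_add, Polynomial.eval_sub,
            Polynomial.eval_C, Polynomial.eval_X]
          try ring
        rw [hcast, hPval, e1, e2, ← hpm, ← hpm1, inv_mul_eq_div, eq_div_iff hne]
        linear_combination heq - p (m : ℤ) * h2y
  intro k
  rcases lt_or_ge k 0 with hk | hk
  · rw [h1 k hk]; simp [Pint, hk]
  · obtain ⟨n, rfl⟩ : ∃ n : ℕ, k = (n : ℤ) := ⟨k.toNat, (Int.toNat_of_nonneg hk).symm⟩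
    exact key n
end
end

section
/- Let q_k^{(b)}(y|q) be defined by ∑_{k≥0} q_k^{(b)} λ^k = (−q^{1/4}xλ, −q^{3/4}x^{−1}λ; q)_∞ / (q^{1/4}b^{−1}λ, q^{3/4}b^{−1}λ; q)_∞ and p_k^{(b)}(y|q) by ∑_{k≥0} p_k^{(b)} λ^k = (q^{1/4}bλ, q^{3/4}bλ; q)_∞ / (−q^{1/4}xλ, −q^{3/4}x^{−1}λ; q)_∞, where y = −(1/2)(q^{−1/4}x + q^{1/4}x^{−1}). Then q_k^{(b)}(y|q) = p_k^{(b^{−1})}(y|q^{−1}) for all k ≥ 0. -/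
noncomputable section

theorem aux_clear (s x b : ℂ) (hs : s ≠ 0) (hx : x ≠ 0) (hb : b ≠ 0) (A B C t : ℂ) (ht0 : t ≠ 0)
    (h : A + (s⁻¹ * x⁻¹ + s⁻¹ ^ 3 * x) * B + s⁻¹ ^ 4 * C
      = t⁻¹ * ((s ^ 4) ^ 2)⁻¹ * A - (s⁻¹ * b⁻¹ + s⁻¹ ^ 3 * b⁻¹) * (t⁻¹ * (s ^ 4)⁻¹) * B
        + s⁻¹ ^ 4 * b⁻¹ ^ 2 * t⁻¹ * C) :
    A - (s * b⁻¹ + s ^ 3 * b⁻¹) * B + s ^ 4 * (b⁻¹) ^ 2 * C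
      = t * (s ^ 4) ^ 2 * A + (s * x + s ^ 3 * x⁻¹) * (t * s ^ 4) * B
        + s ^ 4 * t * C := by
  have e8 : (((s : ℂ) ^ 4) ^ 2)⁻¹ = s⁻¹ ^ 8 := by rw [← pow_mul, ← inv_pow]
  have e4 : ((s : ℂ) ^ 4)⁻¹ = s⁻¹ ^ 4 := by rw [← inv_pow]
  rw [e8, e4] at h
  have k1 : s ^ 28 * x * b ^ 4 * t ^ 3 *
      (A + (s⁻¹ * x⁻¹ + s⁻¹ ^ 3 * x) * B + s⁻¹ ^ 4 * C)
      = s ^ 28 * x * b ^ 4 * t ^ 3 * A + (s ^ 27 + s ^ 25 * x ^ 2) * b ^ 4 * t ^ 3 * B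
        + s ^ 24 * x * b ^ 4 * t ^ 3 * C := by
    field_simp
  have k2 : s ^ 28 * x * b ^ 4 * t ^ 3 *
      (t⁻¹ * s⁻¹ ^ 8 * A - (s⁻¹ * b⁻¹ + s⁻¹ ^ 3 * b⁻¹) * (t⁻¹ * s⁻¹ ^ 4) * B
        + s⁻¹ ^ 4 * b⁻¹ ^ 2 * t⁻¹ * C)
      = s ^ 20 * x * b ^ 4 * t ^ 2 * A - (s ^ 23 + s ^ 21) * x * b ^ 3 * t ^ 2 * B
        + s ^ 24 * x * b ^ 2 * t ^ 2 * C := by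
    have c1 : s ^ 28 * x * b ^ 4 * t ^ 3 * (t⁻¹ * s⁻¹ ^ 8 * A)
        = s ^ 20 * x * b ^ 4 * t ^ 2 * A := by field_simp
    have c2a : s ^ 28 * x * b ^ 4 * t ^ 3 * (s⁻¹ * b⁻¹ * (t⁻¹ * s⁻¹ ^ 4) * B)
        = s ^ 23 * x * b ^ 3 * t ^ 2 * B := by field_simp
    have c2b : s ^ 28 * x * b ^ 4 * t ^ 3 * (s⁻¹ ^ 3 * b⁻¹ * (t⁻¹ * s⁻¹ ^ 4) * B)
        = s ^ 21 * x * b ^ 3 * t ^ 2 * B := by field_simp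
    have expand : (s⁻¹ * b⁻¹ + s⁻¹ ^ 3 * b⁻¹) * (t⁻¹ * s⁻¹ ^ 4) * B
        = s⁻¹ * b⁻¹ * (t⁻¹ * s⁻¹ ^ 4) * B + s⁻¹ ^ 3 * b⁻¹ * (t⁻¹ * s⁻¹ ^ 4) * B := by ring
    have c3 : s ^ 28 * x * b ^ 4 * t ^ 3 * (s⁻¹ ^ 4 * b⁻¹ ^ 2 * t⁻¹ * C)
        = s ^ 24 * x * b ^ 2 * t ^ 2 * C := by field_simp
    rw [mul_add, mul_sub, expand, mul_add, c1, c2a, c2b, c3]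
    ring
  have h' := k1.symm.trans ((congrArg (s ^ 28 * x * b ^ 4 * t ^ 3 * ·) h).trans k2)
  have g1 : s ^ 28 * x * b ^ 4 * t ^ 3 *
      (A - (s * b⁻¹ + s ^ 3 * b⁻¹) * B + s ^ 4 * (b⁻¹) ^ 2 * C)
      = s ^ 28 * x * b ^ 4 * t ^ 3 * A - (s ^ 29 + s ^ 31) * x * b ^ 3 * t ^ 3 * B
        + s ^ 32 * x * b ^ 2 * t ^ 3 * C := by
    field_simp
  have g2 : s ^ 28 * x * b ^ 4 * t ^ 3 *
      (t * (s ^ 4) ^ 2 * A + (s * x + s ^ 3 * x⁻¹) * (t * s ^ 4) * B + s ^ 4 * t * C)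
      = s ^ 36 * x * b ^ 4 * t ^ 4 * A + (s ^ 33 * x ^ 2 + s ^ 35) * b ^ 4 * t ^ 4 * B
        + s ^ 32 * x * b ^ 4 * t ^ 4 * C := by
    field_simp
  refine mul_left_cancel₀ (a := s ^ 28 * x * b ^ 4 * t ^ 3)
    (by simp [hb, ht0, hs, hx]) ?_
  rw [g1, g2]
  linear_combination (-(s ^ 8 * t)) * h'

/-- `q_k^{(b)}(y|q) = p_k^{(b⁻¹)}(y|q⁻¹)` for all `k ≥ 0`; replacing `q` by `q⁻¹`
replaces `s = q^{1/4}` by `s⁻¹`, and the same value of `y` corresponds to `x ↦ x⁻¹`. -/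
theorem qCoeff_eq_pCoeff_inv (s x b : ℂ) (hs : s ≠ 0) (hx : x ≠ 0) (hb : b ≠ 0)
    (habs : ‖s ^ 4‖ < 1) (Q p' : ℤ → ℂ)
    (hQ : IsQCoeff s x b Q) (hp' : IsPCoeff s⁻¹ x⁻¹ b⁻¹ p') :
    ∀ k : ℤ, 0 ≤ k → Q k = p' k := by
  obtain ⟨hQneg, hQ0, hQrec⟩ := hQ
  obtain ⟨hpneg, hp0, hprec⟩ := hp'
  have hs4 : (s : ℂ) ^ 4 ≠ 0 := pow_ne_zero _ hs
  have key : ∀ n : ℕ, Q n = p' n := by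
    intro n
    induction n using Nat.strong_induction_on with
    | _ n ih =>
      match n with
      | 0 => simpa using hQ0.trans hp0.symm
      | (m + 1) =>
        set k : ℤ := ((m + 1 : ℕ) : ℤ) with hk
        have hk1 : k - 1 = ((m : ℕ) : ℤ) := by push_cast [hk]; ring
        have h1 : Q (k - 1) = p' (k - 1) := by
          rw [hk1]; exact ih m (Nat.lt_succ_self m)
        have h2 : Q (k - 2) = p' (k - 2) := by
          match m with
          | 0 =>
            have : k - 2 = -1 := by norm_num [hk]
            rw [this, hQneg _ (by norm_num), hpneg _ (by norm_num)]
          | (j + 1) =>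
            have : k - 2 = ((j : ℕ) : ℤ) := by push_cast [hk]; ring
            rw [this]; exact ih j (by omega)
        -- rewrite power identities
        set t : ℂ := (s ^ 4) ^ (k - 2) with ht
        have ht0 : t ≠ 0 := zpow_ne_zero _ hs4
        have e2 : (s ^ 4) ^ (k - 1) = t * s ^ 4 := by
          rw [ht, ← zpow_add_one₀ hs4]; ring_nf
        have e3 : (s ^ 4) ^ k = t * (s ^ 4) ^ 2 := by
          rw [ht, ← zpow_natCast (s ^ 4) 2, ← zpow_add₀ hs4]; ring_nf
        -- the P-equation, transformed
        have hp := hprec k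
        rw [inv_inv] at hp
        have i0 : (s⁻¹ : ℂ) ^ 4 = (s ^ 4)⁻¹ := by rw [inv_pow]
        have i1 : ((s⁻¹ : ℂ) ^ 4) ^ (k - 2) = t⁻¹ := by rw [i0, inv_zpow, ht]
        have i2 : ((s⁻¹ : ℂ) ^ 4) ^ (k - 1) = t⁻¹ * (s ^ 4)⁻¹ := by
          rw [i0, inv_zpow, e2, mul_inv]
        have i3 : ((s⁻¹ : ℂ) ^ 4) ^ k = t⁻¹ * ((s ^ 4) ^ 2)⁻¹ := by
          rw [i0, inv_zpow, e3, mul_inv]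
        rw [i1, i2, i3] at hp
        have hp2 : p' k + (s⁻¹ * x⁻¹ + s⁻¹ ^ 3 * x) * p' (k - 1) + s⁻¹ ^ 4 * p' (k - 2)
            = t⁻¹ * ((s ^ 4) ^ 2)⁻¹ * p' k
              - (s⁻¹ * b⁻¹ + s⁻¹ ^ 3 * b⁻¹) * (t⁻¹ * (s ^ 4)⁻¹) * p' (k - 1)
              + s⁻¹ ^ 4 * b⁻¹ ^ 2 * t⁻¹ * p' (k - 2) := by
          linear_combination hp
        have eq2 := aux_clear s x b hs hx hb (p' k) (p' (k - 1)) (p' (k - 2)) t ht0 hp2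
        have eq1 := hQrec k
        rw [e2, e3] at eq1
        -- combine
        have hfac : (1 - t * (s ^ 4) ^ 2) * (Q k - p' k) = 0 := by
          linear_combination eq1 - eq2
            + ((s * b⁻¹ + s ^ 3 * b⁻¹) + (s * x + s ^ 3 * x⁻¹) * (t * s ^ 4)) * h1
            + (s ^ 4 * t - s ^ 4 * (b⁻¹) ^ 2) * h2
        have hne : (1 : ℂ) - t * (s ^ 4) ^ 2 ≠ 0 := by
          rw [← e3]
          intro hcon
          have hone : ((s ^ 4 : ℂ)) ^ k = 1 := (sub_eq_zero.mp hcon).symm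
          have habs1 : ‖(s ^ 4) ^ k‖ < 1 := by
            rw [hk, zpow_natCast, norm_pow]
            exact pow_lt_one₀ (norm_nonneg _) habs (Nat.succ_ne_zero m)
          rw [hone] at habs1
          simp at habs1
        have := mul_eq_zero.mp hfac
        rcases this with h | h
        · exact absurd h hne
        · exact sub_eq_zero.mp h
  intro k hk
  lift k to ℕ using hk
  exact key k
end
end

section
/- With p_k = p_k^{(b)}(x,b) the coefficients of the generating function (q^{1/4}bλ, q^{3/4}bλ; q)_∞ / (−q^{1/4}xλ, −q^{3/4}x^{−1}λ; q)_∞, and writing p_k^+ = p_k(x, q^{1/2}b) and p̄_k = p_k(q^{1/2}x, b), the contiguity relation p_k^+ − q^{k/2} p̄_k = −q^{1/4} x p_{k−1}^+ holds for all k ∈ ℤ (with p_k = 0 for k < 0). -/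
noncomputable section

/-- Contiguity relation `p_k⁺ − q^{k/2} p̄_k = −q^{1/4} x p_{k−1}⁺`, where
`p⁺ = p(x, q^{1/2}b)` and `p̄ = p(q^{1/2}x, b)`, with `s = q^{1/4}`. -/
theorem pCoeff_contiguity_plus (s x b : ℂ) (hs : s ≠ 0) (hx : x ≠ 0) (hb : b ≠ 0)
    (habs : ‖s ^ 4‖ < 1) (pp pb : ℤ → ℂ)
    (hpp : IsPCoeff s x (s ^ 2 * b) pp) (hpb : IsPCoeff s (s ^ 2 * x) b pb) :
    ∀ k : ℤ, pp k - (s ^ 2) ^ k * pb k = -(s * x) * pp (k - 1) := by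
  obtain ⟨hpz, hp0, hpr⟩ := hpp
  obtain ⟨hqz, hq0, hqr⟩ := hpb
  have hs2 : (s:ℂ)^2 ≠ 0 := pow_ne_zero _ hs
  have hs4 : (s:ℂ)^4 ≠ 0 := pow_ne_zero _ hs
  suffices h : ∀ k : ℤ, pp k + s*x*pp (k-1) - (s^2)^k * pb k = 0 by
    intro k; linear_combination h k
  have hneg : ∀ k : ℤ, k < 0 → pp k + s*x*pp (k-1) - (s^2)^k * pb k = 0 := by
    intro k hk
    rw [hpz k hk, hpz (k-1) (by omega), hqz k hk]; ring
  have hmain : ∀ n : ℕ, ∀ k : ℤ, k ≤ (n:ℤ) → pp k + s*x*pp (k-1) - (s^2)^k * pb k = 0 := by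
    intro n
    induction n with
    | zero =>
      intro k hk
      rcases lt_or_eq_of_le hk with h | h
      · exact hneg k (by exact_mod_cast h)
      · have hk0 : k = 0 := by exact_mod_cast h
        subst hk0
        rw [hp0, hq0, hpz (0-1) (by norm_num), zpow_zero]; ring
    | succ n ih =>
      intro k hk
      rcases lt_or_eq_of_le hk with h | h
      · exact ih k (by push_cast at h ⊢; omega)
      · have hk1 : k = (n:ℤ) + 1 := by push_cast at h; omega
        have ih1 := ih (k-1) (by omega)
        have ih2 := ih (k-2) (by omega)
        rw [show k-1-1 = k-2 by ring] at ih1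
        rw [show k-2-1 = k-3 by ring] at ih2
        set u : ℂ := (s^2)^(k-3) with hu
        have e1 : ((s:ℂ)^2)^(k-2) = u * s^2 := by
          rw [show k-2 = (k-3)+1 by ring, zpow_add_one₀ hs2]
        have e2 : ((s:ℂ)^2)^(k-1) = u * s^2 * s^2 := by
          rw [show k-1 = (k-2)+1 by ring, zpow_add_one₀ hs2, e1]
        have e3 : ((s:ℂ)^2)^k = u * s^2 * s^2 * s^2 := by
          rw [show k = (k-1)+1 by ring, zpow_add_one₀ hs2, e2]
        have f0 : ((s:ℂ)^4)^(k-3) = u * u := by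
          rw [show (s:ℂ)^4 = s^2*s^2 by ring, mul_zpow]
        have f1 : ((s:ℂ)^4)^(k-2) = u * u * s^4 := by
          rw [show k-2 = (k-3)+1 by ring, zpow_add_one₀ hs4, f0]
        have f2 : ((s:ℂ)^4)^(k-1) = u * u * s^4 * s^4 := by
          rw [show k-1 = (k-2)+1 by ring, zpow_add_one₀ hs4, f1]
        have f3 : ((s:ℂ)^4)^k = u * u * s^4 * s^4 * s^4 := by
          rw [show k = (k-1)+1 by ring, zpow_add_one₀ hs4, f2]
        have h1 := hpr k
        have h2 := hpr (k-1)
        have h3 := hqr k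
        rw [show k-1-1 = k-2 by ring, show k-1-2 = k-3 by ring] at h2
        rw [f1, f2, f3] at h1 h3
        rw [f0, f1, f2] at h2
        rw [e2] at ih1
        rw [e1] at ih2
        rw [e3]
        have hne : (1:ℂ) - u * u * s^4 * s^4 * s^4 ≠ 0 := by
          intro hc
          have h1' : u * u * s^4 * s^4 * s^4 = 1 := by linear_combination -hc
          have h2' : ‖((s:ℂ)^4)^k‖ < 1 := by
            rw [hk1, show ((n:ℤ)+1) = ((n+1:ℕ):ℤ) by push_cast; ring, zpow_natCast, norm_pow]
            exact pow_lt_one₀ (norm_nonneg _) habs (Nat.succ_ne_zero n)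
          rw [f3, h1'] at h2'
          simp at h2'
        have hG : (1 - u * u * s^4 * s^4 * s^4) *
            (pp k + s*x*pp (k-1) - u * s^2 * s^2 * s^2 * pb k) = 0 := by
          linear_combination (norm := (field_simp; ring)) h1 + s^5*x*h2 - (u*s^2*s^2*s^2)*h3
            - (s^5*x + s^3*x⁻¹ + (s^3*b+s^5*b)*s^8*u*u)*ih1 - (s^8 - s^12*b^2*u*u)*ih2
        rcases mul_eq_zero.mp hG with hc | hc
        · exact absurd (by linear_combination hc) hne
        · linear_combination hc
  intro k
  rcases le_or_gt 0 k with h | h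
  · exact hmain k.toNat k (by simp [Int.toNat_of_nonneg h])
  · exact hneg k h
end
end

section
/- With q_k = q_k^{(b)}(x,b) the coefficients of the generating function (−q^{1/4}xλ, −q^{3/4}x^{−1}λ; q)_∞ / (q^{1/4}b^{−1}λ, q^{3/4}b^{−1}λ; q)_∞, and writing q_k^+ = q_k(x, q^{1/2}b) and q̄_k = q_k(q^{1/2}x, b), the contiguity relation q_k^+ − q^{−k/2} q̄_k = −q^{−1/4} x^{−1} q_{k−1}^+ holds for all k ∈ ℤ (with q_k = 0 for k < 0). -/
noncomputable section

/-- Uniqueness of a sequence satisfying the `IsQCoeff` conditions when `|s⁴| < 1`. -/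
lemma isQCoeff_unique_aux {s x b : ℂ} (habs : ‖s ^ 4‖ < 1)
    {Q₁ Q₂ : ℤ → ℂ} (h1 : IsQCoeff s x b Q₁) (h2 : IsQCoeff s x b Q₂) : Q₁ = Q₂ := by
  obtain ⟨h1n, h10, h1r⟩ := h1
  obtain ⟨h2n, h20, h2r⟩ := h2
  suffices H : ∀ n : ℕ, ∀ k : ℤ, k ≤ n → Q₁ k = Q₂ k by
    funext k
    rcases lt_or_ge k 0 with hk | hk
    · rw [h1n k hk, h2n k hk]
    · exact H k.toNat k (by rw [Int.toNat_of_nonneg hk])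
  intro n
  induction n with
  | zero =>
    intro k hk
    rcases lt_or_ge k 0 with h | h
    · rw [h1n k h, h2n k h]
    · have hk0 : k = 0 := le_antisymm (by exact_mod_cast hk) h
      rw [hk0, h10, h20]
  | succ n ih =>
    intro k hk
    rcases le_or_gt k n with h | h
    · exact ih k h
    · have hk1 : k = (n : ℤ) + 1 := le_antisymm (by exact_mod_cast hk) h
      have e1 := h1r k
      have e2 := h2r k
      have d1 : Q₁ (k - 1) = Q₂ (k - 1) := ih _ (by omega)
      have d2 : Q₁ (k - 2) = Q₂ (k - 2) := ih _ (by omega)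
      rw [d1, d2] at e1
      have key : (1 - (s ^ 4) ^ k) * (Q₁ k - Q₂ k) = 0 := by
        linear_combination e1 - e2
      have hne : (1 : ℂ) - (s ^ 4) ^ k ≠ 0 := by
        intro hcon
        have h1' : (s ^ 4) ^ k = 1 := by linear_combination -hcon
        have habs1 : ‖(s ^ 4) ^ k‖ = 1 := by rw [h1']; simp
        have h2' : (s ^ 4) ^ k = (s ^ 4) ^ ((n + 1 : ℕ) : ℤ) := by rw [hk1]; push_cast; ring_nf
        rw [h2', zpow_natCast] at habs1
        have hlt : ‖(s ^ 4) ^ (n + 1 : ℕ)‖ < 1 := by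
          rw [norm_pow]
          exact pow_lt_one₀ (norm_nonneg _) habs (Nat.succ_ne_zero n)
        rw [habs1] at hlt; exact lt_irrefl 1 hlt
      rcases mul_eq_zero.mp key with h' | h'
      · exact absurd h' hne
      · exact sub_eq_zero.mp h'

set_option maxHeartbeats 1000000 in
/-- The shifted combination `(s²)^k (q_k⁺ + s⁻¹x⁻¹ q_{k-1}⁺)` satisfies the `IsQCoeff`
conditions with `x` replaced by `s²x`. -/
lemma isQCoeff_shift_aux (s x b : ℂ) (hs : s ≠ 0) (hx : x ≠ 0) (Qp : ℤ → ℂ)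
    (hQp : IsQCoeff s x (s ^ 2 * b) Qp) :
    IsQCoeff s (s ^ 2 * x) b (fun k => (s ^ 2) ^ k * (Qp k + s⁻¹ * x⁻¹ * Qp (k - 1))) := by
  obtain ⟨hn, h0, hr⟩ := hQp
  have h2 : (s : ℂ) ^ 2 ≠ 0 := pow_ne_zero 2 hs
  refine ⟨?_, ?_, ?_⟩
  · intro k hk
    show (s ^ 2) ^ k * (Qp k + s⁻¹ * x⁻¹ * Qp (k - 1)) = 0
    rw [hn k hk, hn (k - 1) (by omega)]
    simp
  · show (s ^ 2) ^ (0:ℤ) * (Qp 0 + s⁻¹ * x⁻¹ * Qp (0 - 1)) = 1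
    rw [show (0:ℤ) - 1 = -1 by ring, hn (-1) (by omega), h0]
    simp
  · intro k
    simp only
    have A := hr k
    have B := hr (k - 1)
    have r1 : (s ^ 2 : ℂ) ^ (k - 1) = (s ^ 2) ^ k * (s ^ 2)⁻¹ := zpow_sub_one₀ h2 k
    have r2 : (s ^ 2 : ℂ) ^ (k - 2) = (s ^ 2) ^ k * (s ^ 2)⁻¹ * (s ^ 2)⁻¹ := by
      rw [show k - 2 = k - 1 - 1 by ring, zpow_sub_one₀ h2, r1]
    have r3 : (s ^ 2 : ℂ) ^ (k - 3) = (s ^ 2) ^ k * (s ^ 2)⁻¹ * (s ^ 2)⁻¹ * (s ^ 2)⁻¹ := by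
      rw [show k - 3 = k - 2 - 1 by ring, zpow_sub_one₀ h2, r2]
    rw [show (s : ℂ) ^ 4 = s ^ 2 * s ^ 2 by ring] at A B ⊢
    simp only [mul_zpow] at A B ⊢
    simp only [show k - 1 - 1 = k - 2 from by ring, show k - 1 - 2 = k - 3 from by ring,
      show k - 2 - 1 = k - 3 from by ring] at A B ⊢
    rw [r1, r2] at A B ⊢
    rw [r3] at B
    have ht : (s ^ 2 : ℂ) ^ k ≠ 0 := zpow_ne_zero _ h2
    set t := (s ^ 2 : ℂ) ^ k with hT
    simp only [mul_inv, ← inv_pow] at A B ⊢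
    have hsi : s * s⁻¹ = 1 := mul_inv_cancel₀ hs
    have hxy : x * x⁻¹ = 1 := mul_inv_cancel₀ hx
    linear_combination t * A + t * s⁻¹ * x⁻¹ * B +
      (-(Qp (k-2)) * t^3 * s⁻¹^8 + Qp (k-2) * t^3 * s⁻¹^8 * x * x⁻¹
        - Qp (k-2) * t^3 * s * s⁻¹^9 + Qp (k-2) * t^3 * s^2 * s⁻¹^6
        - Qp (k-2) * t^3 * s^2 * s⁻¹^6 * x * x⁻¹ - Qp (k-2) * t^3 * s^2 * s⁻¹^10
        + Qp (k-2) * t^3 * s^3 * s⁻¹^7 - Qp (k-2) * t^3 * s^3 * s⁻¹^11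
        + Qp (k-1) * t^3 * s⁻¹ * x⁻¹ - Qp (k-1) * t^3 * s⁻¹^5 * x⁻¹
        + Qp (k-1) * t^3 * s * s⁻¹^2 * x⁻¹ - Qp (k-1) * t^3 * s * s⁻¹^4 * x
        - Qp (k-1) * t^3 * s * s⁻¹^6 * x⁻¹ + Qp (k-1) * t^3 * s^2 * s⁻¹^3 * x⁻¹
        - Qp (k-1) * t^3 * s^2 * s⁻¹^5 * x - Qp (k-1) * t^3 * s^2 * s⁻¹^7 * x⁻¹) * hsi +
      (Qp (k-2) * t^3 * s⁻¹^8 - Qp (k-2) * t^3 * s^2 * s⁻¹^6) * hxy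


/-- Contiguity relation `q_k⁺ − q^{−k/2} q̄_k = −q^{−1/4} x⁻¹ q_{k−1}⁺`, where
`q⁺ = q(x, q^{1/2}b)` and `q̄ = q(q^{1/2}x, b)`, with `s = q^{1/4}`. -/
theorem qCoeff_contiguity_plus (s x b : ℂ) (hs : s ≠ 0) (hx : x ≠ 0) (hb : b ≠ 0)
    (habs : ‖s ^ 4‖ < 1) (Qp Qb : ℤ → ℂ)
    (hQp : IsQCoeff s x (s ^ 2 * b) Qp) (hQb : IsQCoeff s (s ^ 2 * x) b Qb) :
    ∀ k : ℤ, Qp k - (s ^ 2) ^ (-k) * Qb k = -(s⁻¹ * x⁻¹) * Qp (k - 1) := by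
  have hE := isQCoeff_shift_aux s x b hs hx Qp hQp
  have heq := isQCoeff_unique_aux habs hQb hE
  intro k
  have hk := congrFun heq k
  rw [hk]
  have h2 : (s : ℂ) ^ 2 ≠ 0 := pow_ne_zero 2 hs
  have hu : (s ^ 2 : ℂ) ^ (-k) * (s ^ 2) ^ k = 1 := by
    rw [← zpow_add₀ h2]; simp
  linear_combination (-(Qp k + s⁻¹ * x⁻¹ * Qp (k - 1))) * hu
end
end

section
/- With p_k = p_k(x,b) as in the generating function (q^{1/4}bλ, q^{3/4}bλ; q)_∞ / (−q^{1/4}xλ, −q^{3/4}x^{−1}λ; q)_∞, writing p_k underbar-minus for p_k(q^{−1/2}x, q^{−1/2}b), the relation p_k − q^{k/2} p_k(q^{−1/2}x, q^{−1/2}b) = −q^{3/4} x^{−1} p_{k−1} holds for all k ∈ ℤ (with p_k = 0 for k < 0). -/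
noncomputable section

/-- Contiguity relation `p_k − q^{k/2} p_k(q^{−1/2}x, q^{−1/2}b) = −q^{3/4} x⁻¹ p_{k−1}`,
with `s = q^{1/4}`. -/
theorem pCoeff_contiguity_minus (s x b : ℂ) (hs : s ≠ 0) (hx : x ≠ 0) (hb : b ≠ 0)
    (habs : ‖s ^ 4‖ < 1) (p pm : ℤ → ℂ)
    (hp : IsPCoeff s x b p) (hpm : IsPCoeff s ((s ^ 2)⁻¹ * x) ((s ^ 2)⁻¹ * b) pm) :
    ∀ k : ℤ, p k - (s ^ 2) ^ k * pm k = -(s ^ 3 * x⁻¹) * p (k - 1) := by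
  obtain ⟨hpneg, hp0, hprec⟩ := hp
  obtain ⟨hmneg, hm0, hmrec⟩ := hpm
  have hs2 : (s:ℂ)^2 ≠ 0 := pow_ne_zero 2 hs
  have hpow : ∀ m : ℤ, ((s:ℂ)^4)^m = ((s^2)^m)^2 := by
    intro m; rw [sq, ← mul_zpow, show (s^2*s^2 : ℂ) = s^4 by ring]
  suffices H : ∀ n : ℕ, ∀ k : ℤ, k ≤ n → p k - (s^2)^k * pm k = -(s^3*x⁻¹)*p (k-1) by
    intro k
    rcases le_or_gt k 0 with hk | hk
    · exact H 0 k (by exact_mod_cast hk)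
    · exact H k.toNat k (by rw [Int.toNat_of_nonneg hk.le])
  intro n
  induction n with
  | zero =>
    intro k hk
    have hk0 : k ≤ 0 := by exact_mod_cast hk
    rcases hk0.lt_or_eq with hk' | rfl
    · rw [hpneg k hk', hmneg k hk', hpneg _ (by omega)]; ring
    · rw [hp0, hm0, hpneg _ (by norm_num)]; simp
  | succ n IHn =>
    intro k hk
    rcases le_or_gt k (n:ℤ) with h | h
    · exact IHn k h
    have hk1 : 1 ≤ k := by omega
    set T : ℂ := (s^2)^(k-3) with hT
    have e2a : ((s:ℂ)^2)^(k-2) = T*s^2 := by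
      rw [hT, show k-2 = (k-3)+1 by ring, zpow_add_one₀ hs2]
    have e2b : ((s:ℂ)^2)^(k-1) = T*s^4 := by
      rw [hT, show k-1 = (k-3)+1+1 by ring, zpow_add_one₀ hs2, zpow_add_one₀ hs2]; ring
    have e2c : ((s:ℂ)^2)^k = T*s^6 := by
      rw [hT, show k = (k-3)+1+1+1 by ring, zpow_add_one₀ hs2, zpow_add_one₀ hs2,
        zpow_add_one₀ hs2]; ring
    have e4a : ((s:ℂ)^4)^(k-3) = T^2 := by rw [hpow, hT]
    have e4b : ((s:ℂ)^4)^(k-2) = T^2*s^4 := by rw [hpow, e2a]; ring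
    have e4c : ((s:ℂ)^4)^(k-1) = T^2*s^8 := by rw [hpow, e2b]; ring
    have e4d : ((s:ℂ)^4)^k = T^2*s^12 := by rw [hpow, e2c]; ring
    have hne : (1:ℂ) - T^2*s^12 ≠ 0 := by
      rw [← e4d]
      have habs' : ‖((s:ℂ)^4)^k‖ < 1 := by
        rw [show k = (k.toNat : ℤ) from (Int.toNat_of_nonneg (by omega)).symm,
          zpow_natCast, norm_pow]
        exact pow_lt_one₀ (norm_nonneg _) habs (by omega)
      intro h0
      rw [sub_eq_zero] at h0
      rw [← h0] at habs'
      simp at habs'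
    have E1 := hprec k
    have E2 := hmrec k
    have E3 := hprec (k-1)
    have IH1 := IHn (k-1) (by omega)
    have IH2 := IHn (k-2) (by omega)
    rw [e4c, e4d, e4b] at E1 E2
    rw [show k-1-1 = k-2 by ring, show k-1-2 = k-3 by ring, e4c, e4b, e4a] at E3
    rw [show k-1-1 = k-2 by ring, e2b] at IH1
    rw [show k-2-1 = k-3 by ring, e2a] at IH2
    rw [e2c]
    simp only [mul_inv, inv_inv, ← inv_pow] at E2
    have hsinv : s * s⁻¹ = 1 := mul_inv_cancel₀ hs
    have hxinv : x * x⁻¹ = 1 := mul_inv_cancel₀ hx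
    have key : (1 - T^2*s^12) * (p k - T*s^6*pm k + s^3*x⁻¹*p (k-1)) = 0 := by
      linear_combination
        E1 - (T*s^6) * E2 + (s^7*x⁻¹) * E3
        + (-(s*x + s^7*x⁻¹ + (s*b + s^3*b)*T^2*s^8)) * IH1
        + (-(s^8 - b^2*T^2*s^8)) * IH2
        + ((s^5*x + s^6*s⁻¹*x)*T*pm (k-1)
            + (s^13*b + s^14*s⁻¹*b + s^15*b + s^16*s⁻¹*b)*T^3*pm (k-1)
            - (s^10 + s^11*s⁻¹ + s^12*s⁻¹^2 + s^13*s⁻¹^3)*b^2*T^3*pm (k-2)) * hsinv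
        + ((s^4 - s^8)*p (k-2)) * hxinv
    have hz := (mul_eq_zero.mp key).resolve_left hne
    linear_combination hz
end
end

section
/- With q_k = q_k(x,b) as in the generating function (−q^{1/4}xλ, −q^{3/4}x^{−1}λ; q)_∞ / (q^{1/4}b^{−1}λ, q^{3/4}b^{−1}λ; q)_∞, the relation q_k − q^{−k/2} q_k(q^{−1/2}x, q^{−1/2}b) = −q^{−3/4} x q_{k−1} holds for all k ∈ ℤ (with q_k = 0 for k < 0). -/
noncomputable section

/-- Contiguity relation `q_k − q^{−k/2} q_k(q^{−1/2}x, q^{−1/2}b) = −q^{−3/4} x q_{k−1}`,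
with `s = q^{1/4}`. -/
theorem qCoeff_contiguity_minus (s x b : ℂ) (hs : s ≠ 0) (hx : x ≠ 0) (hb : b ≠ 0)
    (habs : ‖s ^ 4‖ < 1) (Q Qm : ℤ → ℂ)
    (hQ : IsQCoeff s x b Q) (hQm : IsQCoeff s ((s ^ 2)⁻¹ * x) ((s ^ 2)⁻¹ * b) Qm) :
    ∀ k : ℤ, Q k - (s ^ 2) ^ (-k) * Qm k = -(s ^ 3)⁻¹ * x * Q (k - 1) := by
  obtain ⟨hQneg, hQ0, hQrec⟩ := hQ
  obtain ⟨hMneg, hM0, hMrec⟩ := hQm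
  have hs2 : (s:ℂ) ^ 2 ≠ 0 := pow_ne_zero _ hs
  have hs3 : (s:ℂ) ^ 3 ≠ 0 := pow_ne_zero _ hs
  have hs4 : (s:ℂ) ^ 4 ≠ 0 := pow_ne_zero _ hs
  have key : ∀ n : ℕ, ∀ k : ℤ, k ≤ n →
      s ^ 3 * Qm k = (s ^ 2) ^ k * (s ^ 3 * Q k + x * Q (k - 1)) := by
    intro n
    induction n with
    | zero =>
      intro k hk
      rcases lt_or_eq_of_le hk with h | h
      · rw [hQneg k (by exact_mod_cast h), hQneg (k-1) (by omega),
          hMneg k (by exact_mod_cast h)]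
        ring
      · have hk0 : k = 0 := by exact_mod_cast h
        subst hk0
        rw [hQ0, hM0, hQneg (0-1) (by omega)]
        simp
    | succ n ih =>
      intro k hk
      rcases lt_or_ge k (n+1 : ℤ) with h | h
      · exact ih k (by omega)
      · have hk1 : (1:ℤ) ≤ k := by omega
        obtain ⟨T, hT⟩ : ∃ T : ℂ, T = (s ^ 2) ^ (k - 2) := ⟨_, rfl⟩
        have hTne : T ≠ 0 := by rw [hT]; exact zpow_ne_zero _ hs2
        have e1 : (s ^ 2 : ℂ) ^ (k - 1) = s ^ 2 * T := by
          rw [hT, show k - 1 = (k - 2) + 1 by ring, zpow_add_one₀ hs2]; ring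
        have e2 : (s ^ 2 : ℂ) ^ k = s ^ 2 * s ^ 2 * T := by
          rw [hT, show k = (k - 2) + 1 + 1 by ring, zpow_add_one₀ hs2, zpow_add_one₀ hs2]; ring
        have e3 : (s ^ 4 : ℂ) ^ (k - 2) = T * T := by
          rw [hT, show (s:ℂ) ^ 4 = s ^ 2 * s ^ 2 by ring, mul_zpow]
        have e4 : (s ^ 4 : ℂ) ^ (k - 1) = s ^ 4 * (T * T) := by
          rw [show k - 1 = (k - 2) + 1 by ring, zpow_add_one₀ hs4, e3]; ring
        have e5 : (s ^ 4 : ℂ) ^ k = s ^ 4 * s ^ 4 * (T * T) := by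
          rw [show k = (k - 2) + 1 + 1 by ring, zpow_add_one₀ hs4, zpow_add_one₀ hs4, e3]; ring
        have e6 : (s : ℂ) ^ 4 * (s ^ 4) ^ (k - 3) = T * T := by
          rw [mul_comm, ← zpow_add_one₀ hs4, show k - 3 + 1 = k - 2 by ring, e3]
        have h1 := hQrec k
        rw [e5, e4, e3] at h1
        have h2 := hQrec (k - 1)
        rw [show k - 1 - 1 = k - 2 by ring, show k - 1 - 2 = k - 3 by ring, e4, e3,
          mul_assoc ((s:ℂ)^4) ((s^4)^(k-3)), ← mul_assoc ((s:ℂ)^4) ((s^4)^(k-3)), e6] at h2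
        have h3 := hMrec k
        rw [e5, e4, e3] at h3
        have H4 := ih (k - 1) (by omega)
        rw [show k - 1 - 1 = k - 2 by ring, e1] at H4
        have H5 := ih (k - 2) (by omega)
        rw [show k - 2 - 1 = k - 3 by ring, ← hT] at H5
        -- inverse-free versions of the three recurrences
        have H1 : x * b ^ 2 * Q k - (s + s ^ 3) * x * b * Q (k - 1) + s ^ 4 * x * Q (k - 2)
            = s ^ 4 * s ^ 4 * (T * T) * (x * b ^ 2) * Q k
              + (s * x ^ 2 + s ^ 3) * b ^ 2 * (s ^ 4 * (T * T)) * Q (k - 1)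
              + s ^ 4 * (T * T) * x * b ^ 2 * Q (k - 2) := by
          linear_combination (norm := (field_simp; ring1)) (x * b ^ 2) * h1
        have H2 : x * b ^ 2 * Q (k - 1) - (s + s ^ 3) * x * b * Q (k - 2) + s ^ 4 * x * Q (k - 3)
            = s ^ 4 * (T * T) * x * b ^ 2 * Q (k - 1)
              + (s * x ^ 2 + s ^ 3) * b ^ 2 * (T * T) * Q (k - 2)
              + (T * T) * x * b ^ 2 * Q (k - 3) := by
          linear_combination (norm := (field_simp; ring1)) (x * b ^ 2) * h2
        have H3 : s * x * b ^ 2 * Qm k - (s ^ 4 + s ^ 6) * x * b * Qm (k - 1)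
              + s ^ 9 * x * Qm (k - 2)
            = s ^ 4 * s ^ 4 * (T * T) * (s * x * b ^ 2) * Qm k
              + (x ^ 2 + s ^ 6) * b ^ 2 * (s ^ 4 * (T * T)) * Qm (k - 1)
              + s ^ 4 * (T * T) * s * x * b ^ 2 * Qm (k - 2) := by
          linear_combination (norm := (field_simp; ring1)) (s * x * b ^ 2) * h3
        -- nonvanishing of 1 - q^k
        have hq1 : s * x * b ^ 2 * (1 - s ^ 4 * s ^ 4 * (T * T)) ≠ 0 := by
          refine mul_ne_zero (mul_ne_zero (mul_ne_zero hs hx) (pow_ne_zero _ hb)) ?_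
          rw [← e5]
          have habs' : ‖(s ^ 4 : ℂ) ^ k‖ < 1 := by
            have hkn : ((k.toNat : ℤ)) = k := Int.toNat_of_nonneg (by omega)
            have hnat : (s ^ 4 : ℂ) ^ k = (s ^ 4) ^ (k.toNat) := by
              conv_lhs => rw [← hkn]
              exact zpow_natCast _ _
            rw [hnat, norm_pow]
            exact pow_lt_one₀ (norm_nonneg _) habs (by omega)
          intro hcon
          have hone : (s ^ 4 : ℂ) ^ k = 1 := by linear_combination -hcon
          rw [hone] at habs'
          norm_num at habs'
        rw [e2]
        refine mul_left_cancel₀ hq1 ?_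
        linear_combination (-(s ^ 8 * T)) * H1 + (-(s ^ 5 * x * T)) * H2 + s ^ 3 * H3 +
          ((s ^ 4 + s ^ 6) * x * b + (x ^ 2 * s ^ 4 + s ^ 10) * b ^ 2 * (T * T)) * H4 +
          (s ^ 5 * x * b ^ 2 * (T * T) - s ^ 9 * x) * H5
  intro k
  have hkey := key k.toNat k (Int.self_le_toNat k)
  have hz : (s ^ 2 : ℂ) ^ (-k) * (s ^ 2) ^ k = 1 := by
    rw [← zpow_add₀ hs2]; simp
  have hi : (s : ℂ) ^ 3 * (s ^ 3)⁻¹ = 1 := mul_inv_cancel₀ hs3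
  refine mul_left_cancel₀ hs3 ?_
  linear_combination (-((s ^ 2 : ℂ) ^ (-k))) * hkey +
    (-(s ^ 3 * Q k) - x * Q (k - 1)) * hz + (x * Q (k - 1)) * hi
end
end

section
/- With p_k = p_k(x,b) as above, let μ = (x + b^{−1})(x + q^{1/2}b^{−1}), p_k^{++} = p_k(x, qb), and underline-p_k^+ = p_k(q^{−1/2}x, q^{1/2}b). Then (1 − q^{k+1}) p_{k+1} = q^{k/2+1/4} b x (b − b^{−1}) p_k(q^{−1/2}x, q^{1/2}b) − q^{1/4} b^2 x^{−1} μ p_k(x, qb) for all k ∈ ℤ. -/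
noncomputable section

lemma one_sub_zpow_ne (s : ℂ) (habs : ‖s ^ 4‖ < 1) {k : ℤ} (hk : 1 ≤ k) :
    1 - (s ^ 4) ^ k ≠ 0 := by
  intro h
  have h1 : ((s : ℂ) ^ 4) ^ k = 1 := by linear_combination -h
  rw [show k = (k.toNat : ℤ) by omega, zpow_natCast] at h1
  have h2 : ‖s ^ 4‖ ^ k.toNat < 1 :=
    pow_lt_one₀ (norm_nonneg _) habs (by omega)
  rw [← norm_pow, h1] at h2
  simp at h2

/-- Contiguous relation: `p k = ppp k − (sb+s³b) ppp (k−1) + s⁴b² ppp (k−2)` where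
`ppp = p(x, qb)`. -/
lemma pCoeff_step1 (s x b : ℂ) (hs : s ≠ 0) (habs : ‖s ^ 4‖ < 1)
    (p ppp : ℤ → ℂ) (hp : IsPCoeff s x b p) (hppp : IsPCoeff s x (s ^ 4 * b) ppp) :
    ∀ k : ℤ, p k = ppp k - (s * b + s ^ 3 * b) * ppp (k - 1) + s ^ 4 * b ^ 2 * ppp (k - 2) := by
  obtain ⟨hp0, hp1, hprec⟩ := hp
  obtain ⟨hc0, hc1, hcrec⟩ := hppp
  have key : ∀ n : ℕ, ∀ k : ℤ, k ≤ (n : ℤ) →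
      p k = ppp k - (s * b + s ^ 3 * b) * ppp (k - 1) + s ^ 4 * b ^ 2 * ppp (k - 2) := by
    intro n
    induction n with
    | zero =>
      intro k hk
      rcases lt_or_ge k 0 with h | h
      · rw [hp0 k h, hc0 k h, hc0 (k - 1) (by omega), hc0 (k - 2) (by omega)]; ring
      · have hk0 : k = 0 := by omega
        subst hk0
        rw [hp1, hc1, hc0 (0 - 1) (by norm_num), hc0 (0 - 2) (by norm_num)]; ring
    | succ n ih =>
      intro k hk
      by_cases hk' : k ≤ (n : ℤ)
      · exact ih k hk'
      · have hk1 : (1 : ℤ) ≤ k := by omega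
        have e1 := ih (k - 1) (by omega)
        have e2 := ih (k - 2) (by omega)
        have h0 := hprec k
        have r0 := hcrec k
        have r1 := hcrec (k - 1)
        have r2 := hcrec (k - 2)
        rw [show k - 1 - 1 = k - 2 by ring, show k - 1 - 2 = k - 3 by ring] at r1 e1
        rw [show k - 2 - 1 = k - 3 by ring, show k - 2 - 2 = k - 4 by ring] at r2 e2
        have hq4 : ((s : ℂ) ^ 4) ≠ 0 := pow_ne_zero _ hs
        have E1 : ((s : ℂ) ^ 4) ^ (k - 3) = (s ^ 4) ^ (k - 4) * s ^ 4 := by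
          rw [show k - 3 = k - 4 + 1 by ring, zpow_add_one₀ hq4]
        have E2 : ((s : ℂ) ^ 4) ^ (k - 2) = (s ^ 4) ^ (k - 4) * s ^ 8 := by
          rw [show k - 2 = k - 4 + 1 + 1 by ring, zpow_add_one₀ hq4, zpow_add_one₀ hq4]; ring
        have E3 : ((s : ℂ) ^ 4) ^ (k - 1) = (s ^ 4) ^ (k - 4) * s ^ 12 := by
          rw [show k - 1 = k - 4 + 1 + 1 + 1 by ring, zpow_add_one₀ hq4, zpow_add_one₀ hq4,
            zpow_add_one₀ hq4]; ring
        have E4 : ((s : ℂ) ^ 4) ^ k = (s ^ 4) ^ (k - 4) * s ^ 16 := by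
          rw [show k = k - 4 + 1 + 1 + 1 + 1 by ring, zpow_add_one₀ hq4, zpow_add_one₀ hq4,
            zpow_add_one₀ hq4, zpow_add_one₀ hq4]; ring
        simp only [E1, E2, E3, E4] at h0 r0 r1 r2
        refine mul_left_cancel₀ (one_sub_zpow_ne s habs hk1) ?_
        simp only [E4]
        linear_combination h0
          + (-(s * x) - s ^ 3 * x⁻¹ - s ^ 13 * b * (s ^ 4) ^ (k - 4)
              - s ^ 15 * b * (s ^ 4) ^ (k - 4)) * e1
          + (-(s ^ 4) + s ^ 12 * b ^ 2 * (s ^ 4) ^ (k - 4)) * e2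
          - r0 + (s * b + s ^ 3 * b) * r1 - s ^ 4 * b ^ 2 * r2
  intro k
  exact key k.toNat k (Int.self_le_toNat k)

/-- Contiguous relation: `q^k p k = ppp k + (sx+s³x⁻¹) ppp (k−1) + s⁴ ppp (k−2)`. -/
lemma pCoeff_step2 (s x b : ℂ) (hs : s ≠ 0) (habs : ‖s ^ 4‖ < 1)
    (p ppp : ℤ → ℂ) (hp : IsPCoeff s x b p) (hppp : IsPCoeff s x (s ^ 4 * b) ppp) :
    ∀ k : ℤ, (s ^ 4) ^ k * p k
      = ppp k + (s * x + s ^ 3 * x⁻¹) * ppp (k - 1) + s ^ 4 * ppp (k - 2) := by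
  have hstar := pCoeff_step1 s x b hs habs p ppp hp hppp
  obtain ⟨hp0, hp1, hprec⟩ := hp
  obtain ⟨hc0, hc1, hcrec⟩ := hppp
  have key : ∀ n : ℕ, ∀ k : ℤ, k ≤ (n : ℤ) →
      (s ^ 4) ^ k * p k
        = ppp k + (s * x + s ^ 3 * x⁻¹) * ppp (k - 1) + s ^ 4 * ppp (k - 2) := by
    intro n
    induction n with
    | zero =>
      intro k hk
      rcases lt_or_ge k 0 with h | h
      · rw [hp0 k h, hc0 k h, hc0 (k - 1) (by omega), hc0 (k - 2) (by omega)]; ring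
      · have hk0 : k = 0 := by omega
        subst hk0
        rw [hp1, hc1, hc0 (0 - 1) (by norm_num), hc0 (0 - 2) (by norm_num), zpow_zero]; ring
    | succ n ih =>
      intro k hk
      by_cases hk' : k ≤ (n : ℤ)
      · exact ih k hk'
      · have e1 := ih (k - 1) (by omega)
        have e2 := ih (k - 2) (by omega)
        have h0 := hprec k
        have l0 := hstar k
        have l1 := hstar (k - 1)
        have l2 := hstar (k - 2)
        rw [show k - 1 - 1 = k - 2 by ring, show k - 1 - 2 = k - 3 by ring] at l1 e1
        rw [show k - 2 - 1 = k - 3 by ring, show k - 2 - 2 = k - 4 by ring] at l2 e2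
        linear_combination -h0 + l0 + (s * x + s ^ 3 * x⁻¹) * l1 + s ^ 4 * l2
          + (s * b + s ^ 3 * b) * e1 - s ^ 4 * b ^ 2 * e2
  intro k
  exact key k.toNat k (Int.self_le_toNat k)

/-- Contiguous relation: `(s²)^k pup k = ppp k + s³ x⁻¹ ppp (k−1)` where
`pup = p(q^{-1/2}x, q^{1/2}b)` and `ppp = p(x, qb)`. -/
lemma pCoeff_step3 (s x b : ℂ) (hs : s ≠ 0) (hx : x ≠ 0) (habs : ‖s ^ 4‖ < 1)
    (pup ppp : ℤ → ℂ) (hpup : IsPCoeff s ((s ^ 2)⁻¹ * x) (s ^ 2 * b) pup)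
    (hppp : IsPCoeff s x (s ^ 4 * b) ppp) :
    ∀ k : ℤ, (s ^ 2) ^ k * pup k = ppp k + s ^ 3 * x⁻¹ * ppp (k - 1) := by
  obtain ⟨hu0, hu1, hurec⟩ := hpup
  obtain ⟨hc0, hc1, hcrec⟩ := hppp
  have hs2 : ((s : ℂ) ^ 2) ≠ 0 := pow_ne_zero _ hs
  have hxinv : (((s : ℂ) ^ 2)⁻¹ * x)⁻¹ = s ^ 2 * x⁻¹ := by rw [mul_inv, inv_inv]
  have hDD : (s : ℂ) ^ 2 * (s ^ 2)⁻¹ = 1 := mul_inv_cancel₀ hs2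
  have key : ∀ n : ℕ, ∀ k : ℤ, k ≤ (n : ℤ) →
      (s ^ 2) ^ k * pup k = ppp k + s ^ 3 * x⁻¹ * ppp (k - 1) := by
    intro n
    induction n with
    | zero =>
      intro k hk
      rcases lt_or_ge k 0 with h | h
      · rw [hu0 k h, hc0 k h, hc0 (k - 1) (by omega)]; ring
      · have hk0 : k = 0 := by omega
        subst hk0
        rw [hu1, hc1, hc0 (0 - 1) (by norm_num), zpow_zero]; ring
    | succ n ih =>
      intro k hk
      by_cases hk' : k ≤ (n : ℤ)
      · exact ih k hk'
      · have hk1 : (1 : ℤ) ≤ k := by omega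
        have ih1 := ih (k - 1) (by omega)
        have ih2 := ih (k - 2) (by omega)
        have hrecu := hurec k
        have r0 := hcrec k
        have r1 := hcrec (k - 1)
        rw [show k - 1 - 1 = k - 2 by ring, show k - 1 - 2 = k - 3 by ring] at r1
        rw [show k - 1 - 1 = k - 2 by ring] at ih1
        rw [show k - 2 - 1 = k - 3 by ring] at ih2
        rw [hxinv] at hrecu
        have F : ∀ m : ℤ, ((s : ℂ) ^ 4) ^ m = (s ^ 2) ^ m * (s ^ 2) ^ m := fun m => by
          rw [show (s : ℂ) ^ 4 = s ^ 2 * s ^ 2 by ring, mul_zpow]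
        have G1 : ((s : ℂ) ^ 2) ^ (k - 3) = (s ^ 2) ^ (k - 4) * s ^ 2 := by
          rw [show k - 3 = k - 4 + 1 by ring, zpow_add_one₀ hs2]
        have G2 : ((s : ℂ) ^ 2) ^ (k - 2) = (s ^ 2) ^ (k - 4) * s ^ 4 := by
          rw [show k - 2 = k - 4 + 1 + 1 by ring, zpow_add_one₀ hs2, zpow_add_one₀ hs2]; ring
        have G3 : ((s : ℂ) ^ 2) ^ (k - 1) = (s ^ 2) ^ (k - 4) * s ^ 6 := by
          rw [show k - 1 = k - 4 + 1 + 1 + 1 by ring, zpow_add_one₀ hs2, zpow_add_one₀ hs2,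
            zpow_add_one₀ hs2]; ring
        have G4 : ((s : ℂ) ^ 2) ^ k = (s ^ 2) ^ (k - 4) * s ^ 8 := by
          rw [show k = k - 4 + 1 + 1 + 1 + 1 by ring, zpow_add_one₀ hs2, zpow_add_one₀ hs2,
            zpow_add_one₀ hs2, zpow_add_one₀ hs2]; ring
        simp only [F, G1, G2, G3, G4] at hrecu r0 r1 ih1 ih2
        refine mul_left_cancel₀ (one_sub_zpow_ne s habs hk1) ?_
        simp only [F, G4]
        have hxx : x * x⁻¹ = 1 := mul_inv_cancel₀ hx
        linear_combination (s ^ 8 * (s ^ 2) ^ (k - 4)) * hrecu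
          + (-(s * x) - s ^ 7 * x⁻¹ - s ^ 17 * b * ((s ^ 2) ^ (k - 4)) ^ 2
              - s ^ 19 * b * ((s ^ 2) ^ (k - 4)) ^ 2) * ih1
          + (-(s ^ 8) + s ^ 20 * b ^ 2 * ((s ^ 2) ^ (k - 4)) ^ 2) * ih2
          - r0 - s ^ 7 * x⁻¹ * r1
          + (-(s ^ 4) + s ^ 8) * ppp (k - 2) * hxx
          + (-(s ^ 7) * x * (s ^ 2) ^ (k - 4)) * pup (k - 1) * hDD
  intro k
  exact key k.toNat k (Int.self_le_toNat k)

/-- `(1 − q^{k+1}) p_{k+1} = q^{k/2+1/4} b x (b − b⁻¹) p_k(q^{−1/2}x, q^{1/2}b)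
− q^{1/4} b² x⁻¹ μ p_k(x, qb)`, where `μ = (x + b⁻¹)(x + q^{1/2}b⁻¹)` and `s = q^{1/4}`. -/
theorem pCoeff_three_term (s x b : ℂ) (hs : s ≠ 0) (hx : x ≠ 0) (hb : b ≠ 0)
    (habs : ‖s ^ 4‖ < 1) (p pup ppp : ℤ → ℂ)
    (hp : IsPCoeff s x b p) (hpup : IsPCoeff s ((s ^ 2)⁻¹ * x) (s ^ 2 * b) pup)
    (hppp : IsPCoeff s x (s ^ 4 * b) ppp) :
    ∀ k : ℤ,
      (1 - (s ^ 4) ^ (k + 1)) * p (k + 1)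
        = (s ^ 2) ^ k * s * b * x * (b - b⁻¹) * pup k
          - s * b ^ 2 * x⁻¹ * ((x + b⁻¹) * (x + s ^ 2 * b⁻¹)) * ppp k := by
  intro k
  have E1 := pCoeff_step1 s x b hs habs p ppp hp hppp (k + 1)
  have E2 := pCoeff_step2 s x b hs habs p ppp hp hppp (k + 1)
  have E3 := pCoeff_step3 s x b hs hx habs pup ppp hpup hppp k
  rw [show k + 1 - 1 = k by ring, show k + 1 - 2 = k - 1 by ring] at E1 E2
  have hxx : x * x⁻¹ = 1 := mul_inv_cancel₀ hx
  have hbb : b * b⁻¹ = 1 := mul_inv_cancel₀ hb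
  linear_combination E1 - E2 - (s * b * x * (b - b⁻¹)) * E3
    + ((s ^ 4 * b * b⁻¹ - s ^ 4 * b ^ 2) * ppp (k - 1)
        + (s * b ^ 2 * b⁻¹ + s * x * b ^ 2 + s ^ 3 * b ^ 2 * b⁻¹) * ppp k) * hxx
    + (s ^ 4 * ppp (k - 1)
        + (s * b + s * x + s ^ 3 * b + s ^ 3 * x⁻¹ + s ^ 3 * x⁻¹ * b * b⁻¹) * ppp k) * hbb
end
end

section
/- With q_k = q_k(x,b) as above, let μ = (x + b^{−1})(x + q^{1/2}b^{−1}). Then (1 − q^{k+1}b^2) q_{k+1} = q^{(k+1)/2} b (b^{−1} − b) q_{k+1}(q^{−1/2}x, q^{1/2}b) + q^{k+1/4} b^2 x^{−1} μ q_k(x, qb) for all k ∈ ℤ. -/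
noncomputable section

/-- Auxiliary `zpow` shifting lemma. -/
lemma zbs (a : ℂ) (ha : a ≠ 0) {i j : ℤ} (h : i = j + 1) : a ^ i = a ^ j * a := by
  rw [h, zpow_add_one₀ ha]

/-- `(s^4)^k ≠ 1` for `k ≥ 1` when `|s^4| < 1`. -/
lemma qpow_ne_one {s : ℂ} (habs : ‖s ^ 4‖ < 1) {k : ℤ} (hk : 1 ≤ k) :
    ((s:ℂ) ^ 4) ^ k ≠ 1 := by
  lift k to ℕ using (by omega : (0:ℤ) ≤ k)
  rw [zpow_natCast]
  intro H
  have h1 : ‖(s ^ 4) ^ k‖ < 1 := by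
    rw [norm_pow]
    calc ‖s ^ 4‖ ^ k ≤ ‖s ^ 4‖ ^ 1 :=
          pow_le_pow_of_le_one (norm_nonneg _) habs.le (by exact_mod_cast hk)
      _ < 1 := by simpa using habs
  rw [H] at h1; simp at h1

/-- Uniqueness of solutions of the `IsQCoeff` recurrence. -/
lemma IsQCoeff.unique {s x b : ℂ} (habs : ‖s ^ 4‖ < 1)
    {A B : ℤ → ℂ} (hA : IsQCoeff s x b A) (hB : IsQCoeff s x b B) : ∀ k, A k = B k := by
  have key : ∀ n : ℕ, ∀ k : ℤ, k ≤ (n:ℤ) → A k = B k := by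
    intro n
    induction n with
    | zero =>
      intro k hk
      rcases lt_or_eq_of_le hk with h | h
      · rw [hA.1 k (by exact_mod_cast h), hB.1 k (by exact_mod_cast h)]
      · have hk0 : k = 0 := by exact_mod_cast h
        rw [hk0, hA.2.1, hB.2.1]
    | succ n ih =>
      intro k hk
      rcases le_or_gt k (n:ℤ) with h | h
      · exact ih k h
      · have hk1 : (1:ℤ) ≤ k := by omega
        have h1 : A (k-1) = B (k-1) := ih _ (by omega)
        have h2 : A (k-2) = B (k-2) := ih _ (by omega)
        have eA := hA.2.2 k
        have eB := hB.2.2 k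
        rw [h1, h2] at eA
        have hz : (1 - (s^4)^k) * (A k - B k) = 0 := by linear_combination eA - eB
        have hne : (1:ℂ) - (s^4)^k ≠ 0 := by
          intro H
          exact qpow_ne_one habs hk1 (by linear_combination -H)
        exact sub_eq_zero.mp ((mul_eq_zero.mp hz).resolve_left hne)
  intro k
  rcases le_or_gt k 0 with h | h
  · exact key 0 k (by exact_mod_cast h)
  · exact key k.toNat k (Int.self_le_toNat k)

set_option maxHeartbeats 1000000 in
/-- The sequence `(s²)^j Qup j + s³x⁻¹ (s²)^(j-1) Qup (j-1)` satisfies `IsQCoeff s x b`. -/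
lemma up_rep (s x b : ℂ) (hs : s ≠ 0) (hx : x ≠ 0) (hb : b ≠ 0) (Qup : ℤ → ℂ)
    (hQup : IsQCoeff s ((s ^ 2)⁻¹ * x) (s ^ 2 * b) Qup) :
    IsQCoeff s x b (fun j => (s^2)^j * Qup j + s^3 * x⁻¹ * ((s^2)^(j-1) * Qup (j-1))) := by
  obtain ⟨hv, h0, hrec⟩ := hQup
  have hs2 : (s:ℂ)^2 ≠ 0 := pow_ne_zero _ hs
  have hs4 : (s:ℂ)^4 ≠ 0 := pow_ne_zero _ hs
  refine ⟨?_, ?_, ?_⟩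
  · intro k hk
    simp [hv k hk, hv (k-1) (by omega)]
  · have h1 : Qup (-1) = 0 := hv _ (by norm_num)
    simp [h1, h0]
  · intro k
    have E1 := hrec k
    have E2 := hrec (k-1)
    rw [show k-1-1 = k-2 by ring, show k-1-2 = k-3 by ring] at E2
    simp only
    rw [show k-1-1 = k-2 by ring, show k-2-1 = k-3 by ring]
    rw [zbs (s^4) hs4 (show k = (k-1)+1 by ring), zbs (s^4) hs4 (show k-1 = (k-2)+1 by ring),
      zbs (s^4) hs4 (show k-2 = (k-3)+1 by ring)] at E1
    rw [zbs (s^4) hs4 (show k-1 = (k-2)+1 by ring), zbs (s^4) hs4 (show k-2 = (k-3)+1 by ring)] at E2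
    rw [zbs (s^4) hs4 (show k = (k-1)+1 by ring), zbs (s^4) hs4 (show k-1 = (k-2)+1 by ring),
      zbs (s^4) hs4 (show k-2 = (k-3)+1 by ring),
      zbs (s^2) hs2 (show k = (k-1)+1 by ring), zbs (s^2) hs2 (show k-1 = (k-2)+1 by ring),
      zbs (s^2) hs2 (show k-2 = (k-3)+1 by ring)]
    generalize hA4 : ((s:ℂ)^4)^(k-3) = A4 at E1 E2 ⊢
    generalize hA2 : ((s:ℂ)^2)^(k-3) = A2
    have E1c : s^2*b^2*x*Qup k - (s+s^3)*b*x*Qup (k-1) + s^2*x*Qup (k-2)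
        = A4*s^12*(s^2*b^2*x)*Qup k + (s*x^2+s^7)*b^2*(A4*s^8)*Qup (k-1)
          + s^4*(A4*s^4)*(s^2*b^2*x)*Qup (k-2) := by
      linear_combination (norm := (field_simp; ring)) (s^2*b^2*x) * E1
    have E2c : s^2*b^2*x*Qup (k-1) - (s+s^3)*b*x*Qup (k-2) + s^2*x*Qup (k-3)
        = A4*s^8*(s^2*b^2*x)*Qup (k-1) + (s*x^2+s^7)*b^2*(A4*s^4)*Qup (k-2)
          + s^4*A4*(s^2*b^2*x)*Qup (k-3) := by
      linear_combination (norm := (field_simp; ring)) (s^2*b^2*x) * E2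
    field_simp
    linear_combination (norm := (field_simp; ring)) A2*x/s * E1c + A2 * E2c

set_option maxHeartbeats 1000000 in
/-- The sequence `(s⁴)^j Qpp j + (sx+s³x⁻¹)(s⁴)^(j-1) Qpp(j-1) + s⁴ (s⁴)^(j-2) Qpp(j-2)`
satisfies `IsQCoeff s x b`. -/
lemma pp_rep (s x b : ℂ) (hs : s ≠ 0) (hx : x ≠ 0) (hb : b ≠ 0) (Qpp : ℤ → ℂ)
    (hQpp : IsQCoeff s x (s ^ 4 * b) Qpp) :
    IsQCoeff s x b (fun j => (s^4)^j * Qpp j + (s*x + s^3*x⁻¹) * ((s^4)^(j-1) * Qpp (j-1))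
      + s^4 * ((s^4)^(j-2) * Qpp (j-2))) := by
  obtain ⟨hv, h0, hrec⟩ := hQpp
  have hs4 : (s:ℂ)^4 ≠ 0 := pow_ne_zero _ hs
  refine ⟨?_, ?_, ?_⟩
  · intro k hk
    simp [hv k hk, hv (k-1) (by omega), hv (k-2) (by omega)]
  · have h1 : Qpp (-1) = 0 := hv _ (by norm_num)
    have h2 : Qpp (-2) = 0 := hv _ (by norm_num)
    simp [h1, h2, h0]
  · intro k
    have E1 := hrec k
    have E2 := hrec (k-1)
    have E3 := hrec (k-2)
    rw [show k-1-1 = k-2 by ring, show k-1-2 = k-3 by ring] at E2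
    rw [show k-2-1 = k-3 by ring, show k-2-2 = k-4 by ring] at E3
    simp only
    rw [show k-1-1 = k-2 by ring, show k-1-2 = k-3 by ring, show k-2-1 = k-3 by ring,
      show k-2-2 = k-4 by ring]
    rw [zbs (s^4) hs4 (show k = (k-1)+1 by ring), zbs (s^4) hs4 (show k-1 = (k-2)+1 by ring),
      zbs (s^4) hs4 (show k-2 = (k-3)+1 by ring), zbs (s^4) hs4 (show k-3 = (k-4)+1 by ring)] at E1
    rw [zbs (s^4) hs4 (show k-1 = (k-2)+1 by ring), zbs (s^4) hs4 (show k-2 = (k-3)+1 by ring),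
      zbs (s^4) hs4 (show k-3 = (k-4)+1 by ring)] at E2
    rw [zbs (s^4) hs4 (show k-2 = (k-3)+1 by ring), zbs (s^4) hs4 (show k-3 = (k-4)+1 by ring)] at E3
    rw [zbs (s^4) hs4 (show k = (k-1)+1 by ring), zbs (s^4) hs4 (show k-1 = (k-2)+1 by ring),
      zbs (s^4) hs4 (show k-2 = (k-3)+1 by ring), zbs (s^4) hs4 (show k-3 = (k-4)+1 by ring)]
    generalize hA4 : ((s:ℂ)^4)^(k-4) = A4 at E1 E2 E3 ⊢
    have E1c : s^8*b^2*x*Qpp k - (s^5+s^7)*b*x*Qpp (k-1) + s^4*x*Qpp (k-2)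
        = A4*s^16*(s^8*b^2*x)*Qpp k + (s*x^2+s^3)*(A4*s^12)*(s^8*b^2)*Qpp (k-1)
          + s^4*(A4*s^8)*(s^8*b^2*x)*Qpp (k-2) := by
      linear_combination (norm := (field_simp; ring)) (s^8*b^2*x) * E1
    have E2c : s^8*b^2*x*Qpp (k-1) - (s^5+s^7)*b*x*Qpp (k-2) + s^4*x*Qpp (k-3)
        = A4*s^12*(s^8*b^2*x)*Qpp (k-1) + (s*x^2+s^3)*(A4*s^8)*(s^8*b^2)*Qpp (k-2)
          + s^4*(A4*s^4)*(s^8*b^2*x)*Qpp (k-3) := by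
      linear_combination (norm := (field_simp; ring)) (s^8*b^2*x) * E2
    have E3c : s^8*b^2*x*Qpp (k-2) - (s^5+s^7)*b*x*Qpp (k-3) + s^4*x*Qpp (k-4)
        = A4*s^8*(s^8*b^2*x)*Qpp (k-2) + (s*x^2+s^3)*(A4*s^4)*(s^8*b^2)*Qpp (k-3)
          + s^4*A4*(s^8*b^2*x)*Qpp (k-4) := by
      linear_combination (norm := (field_simp; ring)) (s^8*b^2*x) * E3
    field_simp
    linear_combination (norm := (field_simp; ring)) (x*A4*s^8 * E1c + A4*s^4*(s*x^2+s^3) * E2c + x*s^4*A4 * E3c) / s^8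

set_option maxHeartbeats 1000000 in
/-- `(1 − q^{k+1}b²) q_{k+1} = q^{(k+1)/2} b (b⁻¹ − b) q_{k+1}(q^{−1/2}x, q^{1/2}b)
+ q^{k+1/4} b² x⁻¹ μ q_k(x, qb)`, where `μ = (x + b⁻¹)(x + q^{1/2}b⁻¹)` and `s = q^{1/4}`. -/
theorem qCoeff_three_term (s x b : ℂ) (hs : s ≠ 0) (hx : x ≠ 0) (hb : b ≠ 0)
    (habs : ‖s ^ 4‖ < 1) (Q Qup Qpp : ℤ → ℂ)
    (hQ : IsQCoeff s x b Q) (hQup : IsQCoeff s ((s ^ 2)⁻¹ * x) (s ^ 2 * b) Qup)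
    (hQpp : IsQCoeff s x (s ^ 4 * b) Qpp) :
    ∀ k : ℤ,
      (1 - (s ^ 4) ^ (k + 1) * b ^ 2) * Q (k + 1)
        = (s ^ 2) ^ (k + 1) * b * (b⁻¹ - b) * Qup (k + 1)
          + (s ^ 4) ^ k * s * b ^ 2 * x⁻¹ * ((x + b⁻¹) * (x + s ^ 2 * b⁻¹)) * Qpp k := by
  have hs2 : (s:ℂ)^2 ≠ 0 := pow_ne_zero _ hs
  have hs4 : (s:ℂ)^4 ≠ 0 := pow_ne_zero _ hs
  have hQ2 := IsQCoeff.unique habs hQ (up_rep s x b hs hx hb Qup hQup)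
  have hQ3 := IsQCoeff.unique habs hQ (pp_rep s x b hs hx hb Qpp hQpp)
  have hW : ∀ j : ℤ, (s^2)^j * Qup j = (s^4)^j * Qpp j + s*x*((s^4)^(j-1) * Qpp (j-1)) := by
    have key : ∀ n : ℕ, ∀ j : ℤ, j ≤ (n:ℤ) →
        (s^2)^j * Qup j = (s^4)^j * Qpp j + s*x*((s^4)^(j-1) * Qpp (j-1)) := by
      intro n
      induction n with
      | zero =>
        intro j hj
        rcases lt_or_eq_of_le hj with h | h
        · have h' : j < 0 := by exact_mod_cast h
          simp [hQup.1 j h', hQpp.1 j h', hQpp.1 (j-1) (by omega)]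
        · have hj0 : j = 0 := by exact_mod_cast h
          subst hj0
          have h1 : Qpp (-1) = 0 := hQpp.1 _ (by norm_num)
          simp [h1, hQup.2.1, hQpp.2.1]
      | succ n ih =>
        intro j hj
        rcases le_or_gt j (n:ℤ) with h | h
        · exact ih j h
        · have hIH := ih (j-1) (by omega)
          have e2 := hQ2 j
          have e3 := hQ3 j
          rw [show j-1-1 = j-2 by ring] at hIH
          rw [zbs (s^2) hs2 (show j = (j-1)+1 by ring)] at e2 ⊢
          rw [zbs (s^4) hs4 (show j = (j-1)+1 by ring),
            zbs (s^4) hs4 (show j-1 = (j-2)+1 by ring)] at e3 ⊢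
          rw [zbs (s^4) hs4 (show j-1 = (j-2)+1 by ring)] at hIH
          have e2c : x * Q j = (s^2)^(j-1)*s^2*x*Qup j + s^3*((s^2)^(j-1)*Qup (j-1)) := by
            linear_combination (norm := (field_simp; ring)) x * e2
          have e3c : x * Q j = (s^4)^(j-2)*s^8*x*Qpp j + (s*x^2+s^3)*((s^4)^(j-2)*s^4*Qpp (j-1))
              + s^4*x*((s^4)^(j-2)*Qpp (j-2)) := by
            linear_combination (norm := (field_simp; ring)) x * e3
          refine mul_left_cancel₀ hx ?_
          linear_combination e3c - e2c - s^3 * hIH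
    intro j
    rcases le_or_gt j 0 with h | h
    · exact key 0 j (by exact_mod_cast h)
    · exact key j.toNat j (Int.self_le_toNat j)
  intro k
  have E1 := hQ3 (k+1)
  have E2 := hQpp.2.2 (k+1)
  have E3 := hW (k+1)
  rw [show k+1-1 = k by ring, show k+1-2 = k-1 by ring] at E1
  rw [show k+1-1 = k by ring, show k+1-2 = k-1 by ring] at E2
  rw [show k+1-1 = k by ring] at E3
  rw [zbs (s^4) hs4 (show k+1 = k+1 by ring) (j := k), zbs (s^4) hs4 (show k = (k-1)+1 by ring)] at E1
  rw [zbs (s^4) hs4 (show k+1 = k+1 by ring) (j := k), zbs (s^4) hs4 (show k = (k-1)+1 by ring)] at E2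
  rw [zbs (s^4) hs4 (show k+1 = k+1 by ring) (j := k), zbs (s^4) hs4 (show k = (k-1)+1 by ring)] at E3
  rw [zbs (s^4) hs4 (show k+1 = k+1 by ring) (j := k), zbs (s^4) hs4 (show k = (k-1)+1 by ring)]
  generalize hA4 : ((s:ℂ)^4)^(k-1) = A4 at E1 E2 E3 ⊢
  generalize hA2 : ((s:ℂ)^2)^(k+1) = A2 at E3 ⊢
  have E1c : x * Q (k+1) = A4*s^8*x*Qpp (k+1) + (s*x^2+s^3)*(A4*s^4*Qpp k)
      + s^4*x*(A4*Qpp (k-1)) := by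
    linear_combination (norm := (field_simp; ring)) x * E1
  have E2c : s^8*b^2*x*Qpp (k+1) - (s^5+s^7)*b*x*Qpp k + s^4*x*Qpp (k-1)
      = A4*s^16*b^2*x*Qpp (k+1) + (s*x^2+s^3)*(A4*s^12)*b^2*Qpp k
        + A4*s^12*b^2*x*Qpp (k-1) := by
    linear_combination (norm := (field_simp; ring)) (s^8*b^2*x) * E2
  have KEY : x*b^2*(1-A4*s^8*b^2)*Q (k+1)
      = A2*x*b^2*(1-b^2)*Qup (k+1) + A4*s^5*b^2*((b*x+1)*(b*x+s^2))*Qpp k := by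
    linear_combination b^2*(1-b^2*A4*s^8) * E1c + b^2*A4 * E2c - x*b^2*(1-b^2) * E3
  field_simp
  linear_combination (norm := (field_simp; ring)) KEY / b^2
end
end

section
/- For m, n ∈ ℤ_{≥0}, the polynomials R_{m,n}^{(b)}(y|q) satisfy R_{n,m}^{(b^{−1})}(y|q) = (−1)^{m(m+1)/2 + n(n+1)/2} R_{m,n}^{(b)}(y|q). -/
noncomputable section


/-- The determinant `R_{m,n}` of the paper: an `(m+n)×(m+n)` determinant whose first `m`
rows (`i = 1..m`, one-based) are `(q_{2i−1}, q_{2i−2}, …, q_{2i−m−n})` and whose last `n`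
rows increase left to right, with bottom row `(p_{−n−m+2}, …, p_0, p_1)`. -/
def Rdet (m n : ℕ) (p Q : ℤ → ℂ) : ℂ :=
  Matrix.det (Matrix.of fun i j : Fin (m + n) =>
    if (i : ℕ) < m then Q (2 * ((i : ℕ) : ℤ) - ((j : ℕ) : ℤ) + 1)
    else p ((n : ℤ) + (m : ℤ) + ((j : ℕ) : ℤ) - 2 * ((i : ℕ) : ℤ)))


open PowerSeries Finset

/-- Integer-indexed coefficient of a power series (zero for negative index). -/
def zc (F : ℂ⟦X⟧) (k : ℤ) : ℂ := if 0 ≤ k then PowerSeries.coeff k.toNat F else 0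

lemma zc_neg (F : ℂ⟦X⟧) {k : ℤ} (hk : k < 0) : zc F k = 0 := by
  simp [zc, not_le.2 hk]

lemma zc_natCast (F : ℂ⟦X⟧) (n : ℕ) : zc F (n : ℤ) = PowerSeries.coeff n F := by
  simp [zc]

lemma zc_ext {F G : ℂ⟦X⟧} (h : ∀ k : ℤ, zc F k = zc G k) : F = G := by
  ext n
  have := h n
  rwa [zc_natCast, zc_natCast] at this

lemma zc_mk (f : ℤ → ℂ) (hf : ∀ k < (0:ℤ), f k = 0) (k : ℤ) :
    zc (PowerSeries.mk fun n => f n) k = f k := by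
  rcases le_or_gt 0 k with h | h
  · simp [zc, h, Int.toNat_of_nonneg h]
  · rw [zc_neg _ h, hf k h]

lemma zc_add (F G : ℂ⟦X⟧) (k : ℤ) : zc (F + G) k = zc F k + zc G k := by
  unfold zc; split <;> simp

lemma zc_C_mul (a : ℂ) (F : ℂ⟦X⟧) (k : ℤ) : zc (PowerSeries.C a * F) k = a * zc F k := by
  unfold zc; split <;> simp [PowerSeries.coeff_C_mul]

lemma zc_X_mul (F : ℂ⟦X⟧) (k : ℤ) : zc (X * F) k = zc F (k - 1) := by
  rcases lt_trichotomy k 0 with h | h | h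
  · rw [zc_neg _ h, zc_neg _ (show k - 1 < (0:ℤ) by omega)]
  · subst h
    rw [zc_neg _ (show (0:ℤ) - 1 < 0 by norm_num)]
    simp [zc]
  · obtain ⟨n, rfl⟩ : ∃ n : ℕ, k = (n : ℤ) + 1 := ⟨(k-1).toNat, by omega⟩
    rw [show ((n:ℤ) + 1 - 1) = (n:ℤ) by ring, zc_natCast]
    have : ((n:ℤ)+1) = ((n+1 : ℕ) : ℤ) := by push_cast; ring
    rw [this, zc_natCast, PowerSeries.coeff_succ_X_mul]

lemma zc_X_sq_mul (F : ℂ⟦X⟧) (k : ℤ) : zc (X^2 * F) k = zc F (k - 2) := by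
  have : (X^2 : ℂ⟦X⟧) * F = X * (X * F) := by ring
  rw [this, zc_X_mul, zc_X_mul]; ring_nf

lemma zc_X_pow4_mul (F : ℂ⟦X⟧) (k : ℤ) : zc (X^4 * F) k = zc F (k - 4) := by
  have : (X^4 : ℂ⟦X⟧) * F = X^2 * (X^2 * F) := by ring
  rw [this, zc_X_sq_mul, zc_X_sq_mul]; ring_nf

lemma zc_rescale (q : ℂ) (F : ℂ⟦X⟧) (k : ℤ) :
    zc (PowerSeries.rescale q F) k = q ^ k * zc F k := by
  rcases le_or_gt 0 k with h | h
  · obtain ⟨n, rfl⟩ : ∃ n : ℕ, k = (n : ℤ) := ⟨k.toNat, by omega⟩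
    rw [zc_natCast, zc_natCast, PowerSeries.coeff_rescale, zpow_natCast]
  · rw [zc_neg _ h, zc_neg _ h, mul_zero]
/-- The quadratic polynomial `1 + u·X + v·X²` as a power series. -/
def quad (u v : ℂ) : ℂ⟦X⟧ := 1 + PowerSeries.C u * X + PowerSeries.C v * X^2

lemma zc_one (k : ℤ) : zc (1 : ℂ⟦X⟧) k = if k = 0 then 1 else 0 := by
  rcases le_or_gt 0 k with h | h
  · obtain ⟨n, rfl⟩ : ∃ n : ℕ, k = (n : ℤ) := ⟨k.toNat, by omega⟩
    rw [zc_natCast, PowerSeries.coeff_one]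
    simp
  · rw [zc_neg _ h, if_neg (by omega)]

lemma zc_quad_mul (u v : ℂ) (F : ℂ⟦X⟧) (k : ℤ) :
    zc (quad u v * F) k = zc F k + u * zc F (k - 1) + v * zc F (k - 2) := by
  have : quad u v * F = F + PowerSeries.C u * (X * F) + PowerSeries.C v * (X^2 * F) := by
    unfold quad; ring
  rw [this, zc_add, zc_add, zc_C_mul, zc_C_mul, zc_X_mul, zc_X_sq_mul]

/-- Quartic even series. -/
def quart (a b : ℂ) : ℂ⟦X⟧ := 1 + PowerSeries.C a * X^2 + PowerSeries.C b * X^4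

lemma zc_quart_mul (a b : ℂ) (F : ℂ⟦X⟧) (k : ℤ) :
    zc (quart a b * F) k = zc F k + a * zc F (k - 2) + b * zc F (k - 4) := by
  have : quart a b * F = F + PowerSeries.C a * (X^2 * F) + PowerSeries.C b * (X^4 * F) := by
    unfold quart; ring
  rw [this, zc_add, zc_add, zc_C_mul, zc_C_mul, zc_X_sq_mul, zc_X_pow4_mul]

lemma quad_mul_quad_neg (u v : ℂ) :
    quad (-u) v * quad u v = quart (2*v - u^2) (v^2) := by
  unfold quad quart
  have h2 : PowerSeries.C (2*v - u^2) = 2 * PowerSeries.C v - (PowerSeries.C u)^2 := by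
    simp [map_sub, map_mul, map_pow, map_ofNat]
  have h4 : PowerSeries.C (v^2) = (PowerSeries.C v)^2 := by simp [map_pow]
  rw [h2, h4, map_neg]
  ring

lemma qpow_ne_one_s11 {q : ℂ} (hq : ‖q‖ < 1) {n : ℕ} (hn : n ≠ 0) : q ^ n ≠ 1 := by
  intro h
  have h1 : ‖q ^ n‖ = 1 := by rw [h]; simp
  rw [norm_pow] at h1
  have : ‖q‖ ^ n < 1 := by
    calc ‖q‖ ^ n ≤ ‖q‖ := by
          apply pow_le_of_le_one (norm_nonneg q) hq.le hn
      _ < 1 := hq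
  rw [h1] at this; exact lt_irrefl _ this

/-- If an even quartic times `G` equals an even quartic times `rescale q G`, all odd
coefficients of `G` vanish. -/
lemma odd_coeff_zero {q : ℂ} (hq : ‖q‖ < 1) (a2 a4 b2 b4 : ℂ) (G : ℂ⟦X⟧)
    (h : quart a2 a4 * G = quart b2 b4 * PowerSeries.rescale q G) :
    ∀ t : ℕ, PowerSeries.coeff (2*t+1) G = 0 := by
  intro t
  induction t using Nat.strong_induction_on with
  | _ t ih =>
    have hk := congrArg (fun F => zc F ((2*t+1 : ℕ) : ℤ)) h
    simp only [zc_quart_mul, zc_rescale] at hk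
    have e2 : zc G (((2*t+1:ℕ):ℤ) - 2) = 0 := by
      rcases Nat.eq_zero_or_pos t with h0 | h0
      · subst h0; exact zc_neg _ (by norm_num)
      · obtain ⟨t', rfl⟩ := Nat.exists_eq_add_of_le h0
        have : (((2*(1+t')+1:ℕ):ℤ) - 2) = ((2*t'+1 : ℕ) : ℤ) := by push_cast; ring
        rw [this, zc_natCast, ih t' (by omega)]
    have e4 : zc G (((2*t+1:ℕ):ℤ) - 4) = 0 := by
      rcases lt_or_ge t 2 with h0 | h0
      · interval_cases t <;> exact zc_neg _ (by norm_num)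
      · obtain ⟨t', rfl⟩ := Nat.exists_eq_add_of_le h0
        have : (((2*(2+t')+1:ℕ):ℤ) - 4) = ((2*t'+1 : ℕ) : ℤ) := by push_cast; ring
        rw [this, zc_natCast, ih t' (by omega)]
    rw [e2, e4] at hk
    simp only [mul_zero, add_zero] at hk
    -- hk : zc G (2t+1) = q^(2t+1) * zc G (2t+1)
    have hq1 : q ^ ((2*t+1 : ℕ) : ℤ) ≠ 1 := by
      rw [zpow_natCast]; exact qpow_ne_one_s11 hq (by omega)
    have : (1 - q ^ ((2*t+1:ℕ):ℤ)) * zc G ((2*t+1:ℕ):ℤ) = 0 := by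
      linear_combination hk
    rcases mul_eq_zero.1 this with h' | h'
    · exact absurd (by linear_combination -h' : q ^ ((2*t+1:ℕ):ℤ) = 1) hq1
    · rw [← zc_natCast]; exact h'
lemma sum_range_two_mul (h : ℕ → ℂ) (N : ℕ) :
    ∑ i ∈ range (2*N), h i = ∑ t ∈ range N, (h (2*t) + h (2*t+1)) := by
  induction N with
  | zero => simp
  | succ N ih =>
    rw [show 2*(N+1) = 2*N + 1 + 1 by ring, sum_range_succ, sum_range_succ, sum_range_succ, ih]
    ring

/-- Convolution formula: if the odd coefficients of `G` vanish, then
`(G·F)_k = ∑_{t<N} G_{2t} F_{k-2t}` whenever `k < 2N`. -/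
lemma zc_mul_even (G F : ℂ⟦X⟧) (hodd : ∀ t : ℕ, PowerSeries.coeff (2*t+1) G = 0)
    (k : ℤ) (N : ℕ) (hN : k < 2*N) :
    zc (G * F) k = ∑ t ∈ range N, PowerSeries.coeff (2*t) G * zc F (k - 2*t) := by
  rcases lt_or_ge k 0 with h | h
  · rw [zc_neg _ h]
    rw [eq_comm, Finset.sum_eq_zero]
    intro t _
    rw [zc_neg _ (by omega), mul_zero]
  · obtain ⟨n, rfl⟩ : ∃ n : ℕ, k = (n : ℤ) := ⟨k.toNat, by omega⟩
    rw [zc_natCast, PowerSeries.coeff_mul, Finset.Nat.sum_antidiagonal_eq_sum_range_succ_mk]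
    have hsub : range (n+1) ⊆ range (2*N) := by
      apply Finset.range_subset_range.2; omega
    rw [show (∑ i ∈ range (n+1), PowerSeries.coeff i G * PowerSeries.coeff (n-i) F)
        = ∑ i ∈ range (n+1), PowerSeries.coeff i G * zc F ((n:ℤ) - i) from
      Finset.sum_congr rfl fun i hi => by
        rw [Finset.mem_range] at hi
        rw [show ((n:ℤ) - i) = ((n - i : ℕ) : ℤ) by omega, zc_natCast]]
    rw [Finset.sum_subset hsub (fun i _ hi => by
      rw [Finset.mem_range, not_lt] at hi
      rw [zc_neg _ (by omega), mul_zero])]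
    rw [sum_range_two_mul]
    apply Finset.sum_congr rfl
    intro t _
    rw [hodd t, zero_mul, add_zero]
    norm_cast
lemma series_eq_of_rec {q : ℂ} (u v u' v' : ℂ) (f : ℤ → ℂ)
    (hf0 : ∀ k < (0:ℤ), f k = 0)
    (hrec : ∀ k : ℤ, f k + u * f (k-1) + v * f (k-2)
      = q^k * f k + u' * q^(k-1) * f (k-1) + v' * q^(k-2) * f (k-2)) :
    quad u v * PowerSeries.mk (fun n => f n) =
      quad u' v' * PowerSeries.rescale q (PowerSeries.mk (fun n => f n)) := by
  apply zc_ext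
  intro k
  simp only [zc_quad_mul, zc_rescale, zc_mk f hf0]
  linear_combination hrec k

/-- The key convolution construction: if `f` and `g` satisfy "dual" functional equations,
then `f` is an even-shift linear combination of `g` with unit leading coefficient. -/
lemma exists_even_combo {q : ℂ} (hq : ‖q‖ < 1) (u v u' v' : ℂ)
    (f g : ℤ → ℂ) (hf0 : ∀ k < (0:ℤ), f k = 0) (hg0 : ∀ k < (0:ℤ), g k = 0)
    (hf1 : f 0 = 1) (hg1 : g 0 = 1)
    (eqF : quad u v * PowerSeries.mk (fun n => f n)
      = quad u' v' * PowerSeries.rescale q (PowerSeries.mk (fun n => f n)))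
    (eqG : quad (-u') v' * PowerSeries.mk (fun n => g n)
      = quad (-u) v * PowerSeries.rescale q (PowerSeries.mk (fun n => g n))) :
    ∃ c : ℕ → ℂ, c 0 = 1 ∧
      ∀ (k : ℤ) (N : ℕ), k < 2*N → f k = ∑ t ∈ range N, c t * g (k - 2*t) := by
  set FS := PowerSeries.mk (fun n : ℕ => f n) with hFS
  set GS := PowerSeries.mk (fun n : ℕ => g n) with hGS
  have hGconst : PowerSeries.constantCoeff GS ≠ 0 := by
    rw [hGS, PowerSeries.constantCoeff_mk]; simp [hg1]
  have hGne : GS ≠ 0 := fun h => hGconst (by rw [h]; simp)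
  set G := FS * GS⁻¹ with hG
  have hFG : FS = G * GS := by
    rw [hG, mul_assoc, PowerSeries.inv_mul_cancel GS hGconst, mul_one]
  have key : quart (2*v - u^2) (v^2) * G
      = quart (2*v' - u'^2) (v'^2) * PowerSeries.rescale q G := by
    apply mul_right_cancel₀ hGne
    calc quart (2*v - u^2) (v^2) * G * GS
        = quad (-u) v * (quad u v * (G * GS)) := by rw [← quad_mul_quad_neg]; ring
      _ = quad (-u) v * (quad u' v' * PowerSeries.rescale q (G * GS)) := by
          rw [← hFG, eqF]
      _ = quad u' v' * (PowerSeries.rescale q G *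
            (quad (-u) v * PowerSeries.rescale q GS)) := by
          rw [map_mul]; ring
      _ = quad u' v' * (PowerSeries.rescale q G * (quad (-u') v' * GS)) := by rw [← eqG]
      _ = quart (2*v' - u'^2) (v'^2) * PowerSeries.rescale q G * GS := by
          rw [← quad_mul_quad_neg]; ring
  have hodd := odd_coeff_zero hq _ _ _ _ G key
  refine ⟨fun t => PowerSeries.coeff (2*t) G, ?_, ?_⟩
  · show PowerSeries.coeff (2*0) G = 1
    have h0 : PowerSeries.coeff (2*0) G = PowerSeries.constantCoeff G := by
      norm_num [PowerSeries.coeff_zero_eq_constantCoeff_apply]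
    rw [h0, hG, map_mul, PowerSeries.constantCoeff_inv, hFS, hGS,
      PowerSeries.constantCoeff_mk, PowerSeries.constantCoeff_mk]
    simp [hf1, hg1]
  · intro k N hN
    have h1 : f k = zc (G * GS) k := by rw [← hFG, hFS, zc_mk f hf0]
    rw [h1, zc_mul_even G GS hodd k N hN]
    apply Finset.sum_congr rfl
    intro t _
    rw [hGS, zc_mk g hg0]
lemma neg_one_zpow_sub_one (k : ℤ) : (-1:ℂ)^(k-1) = -(-1:ℂ)^k := by
  rw [zpow_sub₀ (by norm_num : (-1:ℂ) ≠ 0), zpow_one, div_neg, div_one]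

lemma neg_one_zpow_sub_two (k : ℤ) : (-1:ℂ)^(k-2) = (-1:ℂ)^k := by
  rw [zpow_sub₀ (by norm_num : (-1:ℂ) ≠ 0)]
  norm_num

lemma neg_one_zpow_mul_self (k : ℤ) : (-1:ℂ)^k * (-1:ℂ)^k = 1 := by
  rw [← mul_zpow]
  norm_num

lemma neg_one_zpow_eq (k : ℤ) : (-1:ℂ)^k = if Even k then 1 else -1 := by
  rcases Int.even_or_odd k with ⟨t, rfl⟩ | ⟨t, rfl⟩
  · rw [if_pos ⟨t, rfl⟩, zpow_add₀ (by norm_num : (-1:ℂ) ≠ 0), neg_one_zpow_mul_self]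
  · rw [if_neg (by rw [Int.even_add_one]; simp [Int.even_mul])]
    rw [zpow_add₀ (by norm_num : (-1:ℂ) ≠ 0), show (2*t:ℤ) = t + t by ring,
      zpow_add₀ (by norm_num : (-1:ℂ) ≠ 0), neg_one_zpow_mul_self, zpow_one, one_mul]

lemma neg_one_pow_nat_eq (j : ℕ) : (-1:ℂ)^j = if Even j then 1 else -1 := by
  rcases Nat.even_or_odd j with h | h
  · rw [if_pos h, h.neg_one_pow]
  · rw [if_neg (Nat.not_even_iff_odd.2 h), h.neg_one_pow]

lemma neg_one_pow_congr' {a b : ℕ} (h : a % 2 = b % 2) : (-1:ℂ)^a = (-1:ℂ)^b := by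
  rcases Nat.even_or_odd a with ha | ha
  · have hb : Even b := by rw [Nat.even_iff] at *; omega
    rw [ha.neg_one_pow, hb.neg_one_pow]
  · have hb : Odd b := by rw [Nat.odd_iff] at *; omega
    rw [ha.neg_one_pow, hb.neg_one_pow]

lemma parity_exp (m n : ℕ) :
    (m + (m+n)*n + (m+n)*(m+n-1)/2) % 2 = (m*(m+1)/2 + n*(n+1)/2) % 2 := by
  obtain ⟨P4, hP4⟩ : ∃ t, m*n = t := ⟨_, rfl⟩
  obtain ⟨P6, hP6⟩ : ∃ t, n*n = t := ⟨_, rfl⟩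
  obtain ⟨A, hA⟩ : ∃ A, (m+n)*(m+n-1) = 2*A := by
    rcases Nat.eq_zero_or_pos (m+n) with h | h
    · exact ⟨0, by simp [h]⟩
    · obtain ⟨k, hk⟩ := Nat.exists_eq_add_of_le h
      obtain ⟨r, hr⟩ := Nat.even_mul_succ_self k
      exact ⟨r, by rw [hk, show 1+k-1 = k by omega, show (1+k)*k = k*(k+1) by ring, hr]; ring⟩
  obtain ⟨Bm, hBm⟩ : ∃ A, m*(m+1) = 2*A := by
    obtain ⟨r, hr⟩ := Nat.even_mul_succ_self m; exact ⟨r, by rw [hr]; ring⟩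
  obtain ⟨Bn, hBn⟩ : ∃ A, n*(n+1) = 2*A := by
    obtain ⟨r, hr⟩ := Nat.even_mul_succ_self n; exact ⟨r, by rw [hr]; ring⟩
  have hA2 : (m+n)*(m+n-1)/2 = A := by rw [hA]; exact Nat.mul_div_cancel_left A (by norm_num)
  have hBm2 : m*(m+1)/2 = Bm := by rw [hBm]; exact Nat.mul_div_cancel_left Bm (by norm_num)
  have hBn2 : n*(n+1)/2 = Bn := by rw [hBn]; exact Nat.mul_div_cancel_left Bn (by norm_num)
  rw [hA2, hBm2, hBn2]
  have key4 : 2*A + 2*m + 2*n = 2*Bm + 2*Bn + 2*P4 := by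
    rw [← hA, ← hBm, ← hBn, ← hP4]
    rcases Nat.eq_zero_or_pos (m+n) with h | h
    · have hm : m = 0 := by omega
      have hn : n = 0 := by omega
      subst hm; subst hn; rfl
    · have h1 : 1 ≤ m + n := h
      zify [h1]
      ring
  have h5 : (m+n)*n = P6 + P4 := by rw [← hP4, ← hP6]; ring
  have hP6mod : P6 % 2 = n % 2 := by
    rw [← hP6]
    rcases Nat.mod_two_eq_zero_or_one n with h | h <;> rw [Nat.mul_mod, h] <;> simp
  rw [h5]
  omega

lemma sign_final (m n : ℕ) :
    (-1:ℂ)^(m + (m+n)*n) * (-1:ℂ)^((m+n)*(m+n-1)/2)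
      = (-1:ℂ)^(m*(m+1)/2 + n*(n+1)/2) := by
  rw [← pow_add]
  exact neg_one_pow_congr' (parity_exp m n)
lemma det_step (m n : ℕ) (pseq Qseq Pt Qt : ℤ → ℂ) (c d : ℕ → ℂ)
    (hp0 : ∀ k < (0:ℤ), pseq k = 0)
    (hc0 : c 0 = 1) (hd0 : d 0 = 1)
    (hconv : ∀ (k:ℤ) (N:ℕ), k < 2*N → Qt k = ∑ t ∈ range N, c t * Qseq (k - 2*t))
    (hdconv : ∀ (k:ℤ) (N:ℕ), k < 2*N → Pt k = ∑ t ∈ range N, d t * pseq (k - 2*t)) :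
    Matrix.det (Matrix.of fun i j : Fin (m+n) =>
      if (i:ℕ) < m then Qt (2*((i:ℕ):ℤ) - ((j:ℕ):ℤ) + 1)
      else Pt ((n:ℤ) + (m:ℤ) + ((j:ℕ):ℤ) - 2*((i:ℕ):ℤ)))
      = Rdet m n pseq Qseq := by
  set A : Matrix (Fin (m+n)) (Fin (m+n)) ℂ := Matrix.of fun i j =>
    if (i:ℕ) < m then Qseq (2*((i:ℕ):ℤ) - ((j:ℕ):ℤ) + 1)
    else pseq ((n:ℤ) + (m:ℤ) + ((j:ℕ):ℤ) - 2*((i:ℕ):ℤ)) with hA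
  set T1 : Matrix (Fin (m+n)) (Fin (m+n)) ℂ := Matrix.of fun i i' =>
    if (i:ℕ) < m ∧ (i':ℕ) ≤ (i:ℕ) then c ((i:ℕ) - (i':ℕ))
    else if i = i' then 1 else 0 with hT1
  set T2 : Matrix (Fin (m+n)) (Fin (m+n)) ℂ := Matrix.of fun i i' =>
    if m ≤ (i:ℕ) ∧ (i:ℕ) ≤ (i':ℕ) then d ((i':ℕ) - (i:ℕ))
    else if i = i' then 1 else 0 with hT2
  -- T2 * A
  have hT2A : T2 * A = Matrix.of fun i j : Fin (m+n) =>
      if (i:ℕ) < m then Qseq (2*((i:ℕ):ℤ) - ((j:ℕ):ℤ) + 1)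
      else Pt ((n:ℤ) + (m:ℤ) + ((j:ℕ):ℤ) - 2*((i:ℕ):ℤ)) := by
    ext i j
    rw [Matrix.mul_apply, Matrix.of_apply]
    by_cases him : (i:ℕ) < m
    · rw [if_pos him]
      have hrow : ∀ i' : Fin (m+n), T2 i i' * A i' j
          = (if i' = i then (1:ℂ) else 0) * A i' j := by
        intro i'
        congr 1
        rw [hT2, Matrix.of_apply, if_neg (by omega)]
        by_cases h : i = i'
        · rw [if_pos h, if_pos h.symm]
        · rw [if_neg h, if_neg (fun h' => h h'.symm)]
      rw [Finset.sum_congr rfl fun i' _ => hrow i']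
      simp only [ite_mul, one_mul, zero_mul]
      rw [Finset.sum_ite_eq' Finset.univ i (fun i' => A i' j), if_pos (Finset.mem_univ i),
        hA, Matrix.of_apply, if_pos him]
    · rw [if_neg him]
      have hrow : ∀ i' : Fin (m+n), T2 i i' * A i' j
          = (if (i:ℕ) ≤ (i':ℕ) then d ((i':ℕ) - (i:ℕ)) else 0) * A i' j := by
        intro i'
        congr 1
        rw [hT2, Matrix.of_apply]
        by_cases hle : (i:ℕ) ≤ (i':ℕ)
        · rw [if_pos ⟨by omega, hle⟩, if_pos hle]
        · rw [if_neg (by tauto), if_neg hle, if_neg (fun h => hle (by rw [h]))]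
      rw [Finset.sum_congr rfl fun i' _ => hrow i']
      have hfin : ∑ i' : Fin (m+n), (if (i:ℕ) ≤ (i':ℕ) then d ((i':ℕ) - (i:ℕ)) else 0) * A i' j
          = ∑ u ∈ range (m+n), (if (i:ℕ) ≤ u then d (u - (i:ℕ)) else 0) *
              (if u < m then Qseq (2*(u:ℤ) - ((j:ℕ):ℤ) + 1)
               else pseq ((n:ℤ) + (m:ℤ) + ((j:ℕ):ℤ) - 2*(u:ℤ))) := by
        rw [← Fin.sum_univ_eq_sum_range (fun u =>
          (if (i:ℕ) ≤ u then d (u - (i:ℕ)) else 0) *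
              (if u < m then Qseq (2*(u:ℤ) - ((j:ℕ):ℤ) + 1)
               else pseq ((n:ℤ) + (m:ℤ) + ((j:ℕ):ℤ) - 2*(u:ℤ)))) (m+n)]
        exact Finset.sum_congr rfl fun i' _ => by rw [hA, Matrix.of_apply]
      rw [hfin]
      have h1 : ∑ u ∈ range (m+n), (if (i:ℕ) ≤ u then d (u - (i:ℕ)) else 0) *
              (if u < m then Qseq (2*(u:ℤ) - ((j:ℕ):ℤ) + 1)
               else pseq ((n:ℤ) + (m:ℤ) + ((j:ℕ):ℤ) - 2*(u:ℤ)))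
          = ∑ u ∈ Finset.Ico (i:ℕ) (m+n), (if (i:ℕ) ≤ u then d (u - (i:ℕ)) else 0) *
              (if u < m then Qseq (2*(u:ℤ) - ((j:ℕ):ℤ) + 1)
               else pseq ((n:ℤ) + (m:ℤ) + ((j:ℕ):ℤ) - 2*(u:ℤ))) := by
        rw [eq_comm]
        apply Finset.sum_subset
        · intro u hu
          rw [Finset.mem_Ico] at hu
          rw [Finset.mem_range]; omega
        · intro u hu hnu
          rw [Finset.mem_range] at hu
          rw [Finset.mem_Ico] at hnu
          rw [if_neg (by omega), zero_mul]
      rw [h1, Finset.sum_Ico_eq_sum_range]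
      have h3 : ∀ t ∈ range (m+n-(i:ℕ)),
          (if (i:ℕ) ≤ (i:ℕ)+t then d ((i:ℕ)+t - (i:ℕ)) else 0) *
              (if (i:ℕ)+t < m then Qseq (2*(((i:ℕ)+t : ℕ):ℤ) - ((j:ℕ):ℤ) + 1)
               else pseq ((n:ℤ) + (m:ℤ) + ((j:ℕ):ℤ) - 2*(((i:ℕ)+t : ℕ):ℤ)))
          = d t * pseq (((n:ℤ) + (m:ℤ) + ((j:ℕ):ℤ) - 2*((i:ℕ):ℤ)) - 2*(t:ℤ)) := by
        intro t ht
        rw [if_pos (Nat.le_add_right _ _), if_neg (by omega),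
          show (i:ℕ)+t - (i:ℕ) = t by omega]
        congr 1
        push_cast
        ring
      rw [Finset.sum_congr rfl h3]
      have hjlt := j.isLt
      have hilt := i.isLt
      have h4 : ∑ t ∈ range (m+n-(i:ℕ)),
            d t * pseq (((n:ℤ) + (m:ℤ) + ((j:ℕ):ℤ) - 2*((i:ℕ):ℤ)) - 2*(t:ℤ))
          = ∑ t ∈ range (m+n),
            d t * pseq (((n:ℤ) + (m:ℤ) + ((j:ℕ):ℤ) - 2*((i:ℕ):ℤ)) - 2*(t:ℤ)) := by
        apply Finset.sum_subset
        · exact Finset.range_subset_range.2 (by omega)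
        · intro t ht hnt
          rw [Finset.mem_range] at ht hnt
          rw [hp0 _ (by omega), mul_zero]
      rw [h4, ← hdconv _ _ (by omega)]
  -- B = T1 * (T2 * A)
  have hB : (Matrix.of fun i j : Fin (m+n) =>
      if (i:ℕ) < m then Qt (2*((i:ℕ):ℤ) - ((j:ℕ):ℤ) + 1)
      else Pt ((n:ℤ) + (m:ℤ) + ((j:ℕ):ℤ) - 2*((i:ℕ):ℤ))) = T1 * (T2 * A) := by
    rw [hT2A]
    ext i j
    rw [Matrix.mul_apply, Matrix.of_apply]
    by_cases him : (i:ℕ) < m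
    · rw [if_pos him]
      have hrow : ∀ i' : Fin (m+n), T1 i i' * Matrix.of (fun i j : Fin (m+n) =>
          if (i:ℕ) < m then Qseq (2*((i:ℕ):ℤ) - ((j:ℕ):ℤ) + 1)
          else Pt ((n:ℤ) + (m:ℤ) + ((j:ℕ):ℤ) - 2*((i:ℕ):ℤ))) i' j
          = (if (i':ℕ) ≤ (i:ℕ) then c ((i:ℕ) - (i':ℕ)) else 0) *
            (if (i':ℕ) < m then Qseq (2*((i':ℕ):ℤ) - ((j:ℕ):ℤ) + 1)
             else Pt ((n:ℤ) + (m:ℤ) + ((j:ℕ):ℤ) - 2*((i':ℕ):ℤ))) := by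
        intro i'
        rw [Matrix.of_apply]
        congr 1
        rw [hT1, Matrix.of_apply]
        by_cases hle : (i':ℕ) ≤ (i:ℕ)
        · rw [if_pos ⟨him, hle⟩, if_pos hle]
        · rw [if_neg (by tauto), if_neg hle, if_neg (fun h => hle (by rw [h]))]
      rw [Finset.sum_congr rfl fun i' _ => hrow i']
      have hfin : ∑ i' : Fin (m+n), (if (i':ℕ) ≤ (i:ℕ) then c ((i:ℕ) - (i':ℕ)) else 0) *
            (if (i':ℕ) < m then Qseq (2*((i':ℕ):ℤ) - ((j:ℕ):ℤ) + 1)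
             else Pt ((n:ℤ) + (m:ℤ) + ((j:ℕ):ℤ) - 2*((i':ℕ):ℤ)))
          = ∑ u ∈ range (m+n), (if u ≤ (i:ℕ) then c ((i:ℕ) - u) else 0) *
            (if u < m then Qseq (2*(u:ℤ) - ((j:ℕ):ℤ) + 1)
             else Pt ((n:ℤ) + (m:ℤ) + ((j:ℕ):ℤ) - 2*(u:ℤ))) := by
        rw [← Fin.sum_univ_eq_sum_range (fun u => (if u ≤ (i:ℕ) then c ((i:ℕ) - u) else 0) *
            (if u < m then Qseq (2*(u:ℤ) - ((j:ℕ):ℤ) + 1)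
             else Pt ((n:ℤ) + (m:ℤ) + ((j:ℕ):ℤ) - 2*(u:ℤ)))) (m+n)]
      rw [hfin]
      have hilt := i.isLt
      have h1 : ∑ u ∈ range (m+n), (if u ≤ (i:ℕ) then c ((i:ℕ) - u) else 0) *
            (if u < m then Qseq (2*(u:ℤ) - ((j:ℕ):ℤ) + 1)
             else Pt ((n:ℤ) + (m:ℤ) + ((j:ℕ):ℤ) - 2*(u:ℤ)))
          = ∑ u ∈ range ((i:ℕ)+1), (if u ≤ (i:ℕ) then c ((i:ℕ) - u) else 0) *
            (if u < m then Qseq (2*(u:ℤ) - ((j:ℕ):ℤ) + 1)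
             else Pt ((n:ℤ) + (m:ℤ) + ((j:ℕ):ℤ) - 2*(u:ℤ))) := by
        rw [eq_comm]
        apply Finset.sum_subset (Finset.range_subset_range.2 (by omega))
        intro u hu hnu
        rw [Finset.mem_range] at hu hnu
        rw [if_neg (by omega), zero_mul]
      rw [h1]
      have h2 : ∀ u ∈ range ((i:ℕ)+1), (if u ≤ (i:ℕ) then c ((i:ℕ) - u) else 0) *
            (if u < m then Qseq (2*(u:ℤ) - ((j:ℕ):ℤ) + 1)
             else Pt ((n:ℤ) + (m:ℤ) + ((j:ℕ):ℤ) - 2*(u:ℤ)))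
          = c ((i:ℕ) - u) * Qseq (2*(u:ℤ) - ((j:ℕ):ℤ) + 1) := by
        intro u hu
        rw [Finset.mem_range] at hu
        rw [if_pos (by omega), if_pos (by omega)]
      rw [Finset.sum_congr rfl h2, ← Finset.sum_range_reflect]
      have h3 : ∀ t ∈ range ((i:ℕ)+1),
          c ((i:ℕ) - ((i:ℕ)+1-1-t)) * Qseq (2*(((i:ℕ)+1-1-t : ℕ):ℤ) - ((j:ℕ):ℤ) + 1)
          = c t * Qseq ((2*((i:ℕ):ℤ) - ((j:ℕ):ℤ) + 1) - 2*(t:ℤ)) := by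
        intro t ht
        rw [Finset.mem_range] at ht
        rw [show (i:ℕ) - ((i:ℕ)+1-1-t) = t by omega]
        congr 1
        have : (((i:ℕ)+1-1-t : ℕ):ℤ) = (i:ℕ) - (t:ℤ) := by omega
        rw [this]
        ring
      rw [Finset.sum_congr rfl h3, ← hconv _ _ (by omega)]
    · rw [if_neg him]
      have hrow : ∀ i' : Fin (m+n), T1 i i' * Matrix.of (fun i j : Fin (m+n) =>
          if (i:ℕ) < m then Qseq (2*((i:ℕ):ℤ) - ((j:ℕ):ℤ) + 1)
          else Pt ((n:ℤ) + (m:ℤ) + ((j:ℕ):ℤ) - 2*((i:ℕ):ℤ))) i' j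
          = (if i' = i then (1:ℂ) else 0) * Matrix.of (fun i j : Fin (m+n) =>
          if (i:ℕ) < m then Qseq (2*((i:ℕ):ℤ) - ((j:ℕ):ℤ) + 1)
          else Pt ((n:ℤ) + (m:ℤ) + ((j:ℕ):ℤ) - 2*((i:ℕ):ℤ))) i' j := by
        intro i'
        congr 1
        rw [hT1, Matrix.of_apply, if_neg (by tauto)]
        by_cases h : i = i'
        · rw [if_pos h, if_pos h.symm]
        · rw [if_neg h, if_neg (fun h' => h h'.symm)]
      rw [Finset.sum_congr rfl fun i' _ => hrow i']
      simp only [ite_mul, one_mul, zero_mul]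
      rw [Finset.sum_ite_eq' Finset.univ i (fun i' => Matrix.of (fun i j : Fin (m+n) =>
          if (i:ℕ) < m then Qseq (2*((i:ℕ):ℤ) - ((j:ℕ):ℤ) + 1)
          else Pt ((n:ℤ) + (m:ℤ) + ((j:ℕ):ℤ) - 2*((i:ℕ):ℤ))) i' j),
        if_pos (Finset.mem_univ i), Matrix.of_apply, if_neg him]
  -- determinants of T1 and T2
  have hdetT1 : T1.det = 1 := by
    rw [Matrix.det_of_lowerTriangular T1 ?_]
    · apply Finset.prod_eq_one
      intro i _
      rw [hT1, Matrix.of_apply]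
      by_cases him : (i:ℕ) < m
      · rw [if_pos ⟨him, le_refl _⟩, Nat.sub_self, hc0]
      · rw [if_neg (by tauto), if_pos rfl]
    · intro i j hij
      have hij' : (j:ℕ) > (i:ℕ) := hij
      rw [hT1, Matrix.of_apply, if_neg (by omega), if_neg (by omega)]
  have hdetT2 : T2.det = 1 := by
    rw [Matrix.det_of_upperTriangular (?_ : T2.BlockTriangular id)]
    · apply Finset.prod_eq_one
      intro i _
      rw [hT2, Matrix.of_apply]
      by_cases him : m ≤ (i:ℕ)
      · rw [if_pos ⟨him, le_refl _⟩, Nat.sub_self, hd0]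
      · rw [if_neg (by tauto), if_pos rfl]
    · intro i j hij
      have hij' : (j:ℕ) < (i:ℕ) := hij
      rw [hT2, Matrix.of_apply, if_neg (by omega), if_neg (by omega)]
  rw [hB, Matrix.det_mul, Matrix.det_mul, hdetT1, hdetT2, one_mul, one_mul]
  rfl
lemma sign_split (a : ℤ) (b j : ℕ) (h : a % 2 = ((b:ℤ) + (j:ℤ)) % 2) :
    (-1:ℂ)^a = (-1:ℂ)^b * (-1:ℂ)^j := by
  rw [neg_one_zpow_eq, neg_one_pow_nat_eq, neg_one_pow_nat_eq]
  by_cases hb : Even b <;> by_cases hj : Even j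
  · rw [if_pos hb, if_pos hj, if_pos ?_, one_mul]
    rw [Int.even_iff]; rw [Nat.even_iff] at hb hj; omega
  · rw [if_pos hb, if_neg hj, if_neg ?_, one_mul]
    rw [Int.even_iff]; rw [Nat.even_iff] at hb hj; omega
  · rw [if_neg hb, if_pos hj, if_neg ?_, mul_one]
    rw [Int.even_iff]; rw [Nat.even_iff] at hb hj; omega
  · rw [if_neg hb, if_neg hj, if_pos ?_]
    · norm_num
    · rw [Int.even_iff]; rw [Nat.even_iff] at hb hj; omega

lemma reverse_step (m n : ℕ) (p' Q' Pt Qt : ℤ → ℂ)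
    (hp'Qt : ∀ k, p' k = (-1:ℂ)^k * Qt k) (hQ'Pt : ∀ k, Q' k = (-1:ℂ)^k * Pt k) :
    Rdet n m p' Q' = (-1:ℂ)^(m + (m+n)*n) * ((-1:ℂ)^((m+n)*(m+n-1)/2) *
      Matrix.det (Matrix.of fun i j : Fin (m+n) =>
        if (i:ℕ) < m then Qt (2*((i:ℕ):ℤ) - ((j:ℕ):ℤ) + 1)
        else Pt ((n:ℤ) + (m:ℤ) + ((j:ℕ):ℤ) - 2*((i:ℕ):ℤ)))) := by
  set B : Matrix (Fin (m+n)) (Fin (m+n)) ℂ := Matrix.of fun i j =>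
    if (i:ℕ) < m then Qt (2*((i:ℕ):ℤ) - ((j:ℕ):ℤ) + 1)
    else Pt ((n:ℤ) + (m:ℤ) + ((j:ℕ):ℤ) - 2*((i:ℕ):ℤ)) with hB
  set M : Matrix (Fin (n+m)) (Fin (n+m)) ℂ := Matrix.of fun i j =>
    if (i:ℕ) < n then Q' (2*((i:ℕ):ℤ) - ((j:ℕ):ℤ) + 1)
    else p' ((m:ℤ) + (n:ℤ) + ((j:ℕ):ℤ) - 2*((i:ℕ):ℤ)) with hM
  have h0 : Rdet n m p' Q' = M.det := rfl
  let e : Fin (m+n) ≃ Fin (n+m) :=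
    { toFun := fun i => ⟨m+n-1-(i:ℕ), by have := i.isLt; omega⟩
      invFun := fun i => ⟨n+m-1-(i:ℕ), by have := i.isLt; omega⟩
      left_inv := fun i => by
        have := i.isLt
        ext
        show n+m-1-(m+n-1-(i:ℕ)) = (i:ℕ)
        omega
      right_inv := fun i => by
        have := i.isLt
        ext
        show m+n-1-(n+m-1-(i:ℕ)) = (i:ℕ)
        omega }
  have hval : ∀ i : Fin (m+n), ((e i : Fin (n+m)) : ℕ) = m+n-1-(i:ℕ) := fun i => rfl
  have hsub : (M.submatrix e e).det = M.det := Matrix.det_submatrix_equiv_self e M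
  have hentry : M.submatrix e e = Matrix.of fun i j : Fin (m+n) =>
      (if (i:ℕ) < m then (-1:ℂ) else (-1:ℂ)^(m+n)) *
        ((Matrix.of fun i j : Fin (m+n) => (-1:ℂ)^(j:ℕ) * B i j) i j) := by
    ext i j
    have hi := i.isLt
    have hj := j.isLt
    rw [Matrix.submatrix_apply, hM, Matrix.of_apply, Matrix.of_apply, Matrix.of_apply,
      hval, hval]
    by_cases him : (i:ℕ) < m
    · rw [if_neg (show ¬(m+n-1-(i:ℕ) < n) by omega), if_pos him]
      have harg : (m:ℤ) + (n:ℤ) + ((m+n-1-(j:ℕ) : ℕ):ℤ) - 2*((m+n-1-(i:ℕ) : ℕ):ℤ)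
          = 2*((i:ℕ):ℤ) - ((j:ℕ):ℤ) + 1 := by omega
      rw [harg, hp'Qt]
      rw [show ((-1:ℂ))^(2*((i:ℕ):ℤ) - ((j:ℕ):ℤ) + 1)
          = (-1:ℂ)^(1:ℕ) * (-1:ℂ)^(j:ℕ) from sign_split _ 1 j (by omega)]
      simp only [hB, Matrix.of_apply, him, if_true, pow_one]
      ring
    · rw [if_pos (show m+n-1-(i:ℕ) < n by omega), if_neg him]
      have harg : 2*((m+n-1-(i:ℕ) : ℕ):ℤ) - ((m+n-1-(j:ℕ) : ℕ):ℤ) + 1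
          = (n:ℤ) + (m:ℤ) + ((j:ℕ):ℤ) - 2*((i:ℕ):ℤ) := by omega
      rw [harg, hQ'Pt]
      rw [show ((-1:ℂ))^((n:ℤ) + (m:ℤ) + ((j:ℕ):ℤ) - 2*((i:ℕ):ℤ))
          = (-1:ℂ)^(m+n:ℕ) * (-1:ℂ)^(j:ℕ) from sign_split _ (m+n) j (by omega)]
      simp only [hB, Matrix.of_apply, him, if_false]
      ring
  have hprod1 : (∏ i : Fin (m+n), (if (i:ℕ) < m then (-1:ℂ) else (-1:ℂ)^(m+n)))
      = (-1:ℂ)^(m + (m+n)*n) := by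
    rw [Fin.prod_univ_eq_prod_range (fun u => if u < m then (-1:ℂ) else (-1:ℂ)^(m+n)) (m+n),
      Finset.prod_range_add (fun u => if u < m then (-1:ℂ) else (-1:ℂ)^(m+n)) m n]
    rw [Finset.prod_congr rfl (fun u hu => if_pos (Finset.mem_range.1 hu)),
      Finset.prod_congr rfl (fun u (hu : u ∈ range n) => if_neg (by omega))]
    rw [Finset.prod_const, Finset.prod_const, Finset.card_range, Finset.card_range,
      ← pow_mul, ← pow_add]
  have hprod2 : (∏ j : Fin (m+n), (-1:ℂ)^(j:ℕ)) = (-1:ℂ)^((m+n)*(m+n-1)/2) := by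
    rw [Fin.prod_univ_eq_prod_range (fun u => (-1:ℂ)^u) (m+n),
      Finset.prod_pow_eq_pow_sum, Finset.sum_range_id]
  rw [h0, ← hsub, hentry,
    Matrix.det_mul_column (fun i : Fin (m+n) => if (i:ℕ) < m then (-1:ℂ) else (-1:ℂ)^(m+n))
      (Matrix.of fun i j : Fin (m+n) => (-1:ℂ)^(j:ℕ) * B i j),
    Matrix.det_mul_row (fun j : Fin (m+n) => (-1:ℂ)^(j:ℕ)) B, hprod1, hprod2]
/-- `R_{n,m}^{(b⁻¹)}(y|q) = (−1)^{m(m+1)/2 + n(n+1)/2} R_{m,n}^{(b)}(y|q)`. -/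
theorem Rdet_b_inv_symmetry (s x b : ℂ) (hs : s ≠ 0) (hx : x ≠ 0) (hb : b ≠ 0)
    (habs : ‖s ^ 4‖ < 1) (m n : ℕ) (p Q p' Q' : ℤ → ℂ)
    (hp : IsPCoeff s x b p) (hQ : IsQCoeff s x b Q)
    (hp' : IsPCoeff s x b⁻¹ p') (hQ' : IsQCoeff s x b⁻¹ Q') :
    Rdet n m p' Q' = (-1 : ℂ) ^ (m * (m + 1) / 2 + n * (n + 1) / 2) * Rdet m n p Q := by
  obtain ⟨hp0, hp1, hpr⟩ := hp
  obtain ⟨hQ0, hQ1, hQr⟩ := hQ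
  obtain ⟨hp'0, hp'1, hp'r⟩ := hp'
  obtain ⟨hQ'0, hQ'1, hQ'r⟩ := hQ'
  simp only [inv_inv] at hQ'r
  set Qt : ℤ → ℂ := fun k => (-1:ℂ)^k * p' k with hQtdef
  set Pt : ℤ → ℂ := fun k => (-1:ℂ)^k * Q' k with hPtdef
  have hQt0 : ∀ k < (0:ℤ), Qt k = 0 := by
    intro k hk
    simp only [hQtdef]
    rw [hp'0 k hk, mul_zero]
  have hPt0 : ∀ k < (0:ℤ), Pt k = 0 := by
    intro k hk
    simp only [hPtdef]
    rw [hQ'0 k hk, mul_zero]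
  have hQt1 : Qt 0 = 1 := by simp only [hQtdef]; rw [hp'1]; norm_num
  have hPt1 : Pt 0 = 1 := by simp only [hPtdef]; rw [hQ'1]; norm_num
  have hQtr : ∀ k : ℤ, Qt k + (-(s*x+s^3*x⁻¹)) * Qt (k-1) + (s^4) * Qt (k-2)
      = (s^4)^k * Qt k + (s*b⁻¹+s^3*b⁻¹) * (s^4)^(k-1) * Qt (k-1)
        + (s^4*(b⁻¹)^2) * (s^4)^(k-2) * Qt (k-2) := by
    intro k
    simp only [hQtdef]
    rw [neg_one_zpow_sub_one, neg_one_zpow_sub_two]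
    linear_combination ((-1:ℂ)^k) * hp'r k
  have hPtr : ∀ k : ℤ, Pt k + (s*b+s^3*b) * Pt (k-1) + (s^4*b^2) * Pt (k-2)
      = (s^4)^k * Pt k + (-(s*x+s^3*x⁻¹)) * (s^4)^(k-1) * Pt (k-1)
        + (s^4) * (s^4)^(k-2) * Pt (k-2) := by
    intro k
    simp only [hPtdef]
    rw [neg_one_zpow_sub_one, neg_one_zpow_sub_two]
    linear_combination ((-1:ℂ)^k) * hQ'r k
  have hQr2 : ∀ k : ℤ, Q k + (-(s*b⁻¹+s^3*b⁻¹)) * Q (k-1) + (s^4*(b⁻¹)^2) * Q (k-2)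
      = (s^4)^k * Q k + (s*x+s^3*x⁻¹) * (s^4)^(k-1) * Q (k-1)
        + (s^4) * (s^4)^(k-2) * Q (k-2) := fun k => by linear_combination hQr k
  have hpr2 : ∀ k : ℤ, p k + (s*x+s^3*x⁻¹) * p (k-1) + (s^4) * p (k-2)
      = (s^4)^k * p k + (-(s*b+s^3*b)) * (s^4)^(k-1) * p (k-1)
        + (s^4*b^2) * (s^4)^(k-2) * p (k-2) := fun k => by linear_combination hpr k
  have eqQt := series_eq_of_rec (q := s^4) (-(s*x+s^3*x⁻¹)) (s^4) (s*b⁻¹+s^3*b⁻¹)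
    (s^4*(b⁻¹)^2) Qt hQt0 hQtr
  have eqQ := series_eq_of_rec (q := s^4) (-(s*b⁻¹+s^3*b⁻¹)) (s^4*(b⁻¹)^2) (s*x+s^3*x⁻¹)
    (s^4) Q hQ0 hQr2
  have eqPt := series_eq_of_rec (q := s^4) (s*b+s^3*b) (s^4*b^2) (-(s*x+s^3*x⁻¹))
    (s^4) Pt hPt0 hPtr
  have eqp := series_eq_of_rec (q := s^4) (s*x+s^3*x⁻¹) (s^4) (-(s*b+s^3*b))
    (s^4*b^2) p hp0 hpr2
  obtain ⟨c, hc0, hconv⟩ := exists_even_combo habs (-(s*x+s^3*x⁻¹)) (s^4) (s*b⁻¹+s^3*b⁻¹)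
    (s^4*(b⁻¹)^2) Qt Q hQt0 hQ0 hQt1 hQ1 eqQt (by rw [neg_neg]; exact eqQ)
  obtain ⟨d, hd0, hdconv⟩ := exists_even_combo habs (s*b+s^3*b) (s^4*b^2) (-(s*x+s^3*x⁻¹))
    (s^4) Pt p hPt0 hp0 hPt1 hp1 eqPt (by rw [neg_neg]; exact eqp)
  have hp'Qt : ∀ k : ℤ, p' k = (-1:ℂ)^k * Qt k := by
    intro k
    simp only [hQtdef]
    rw [← mul_assoc, neg_one_zpow_mul_self, one_mul]
  have hQ'Pt : ∀ k : ℤ, Q' k = (-1:ℂ)^k * Pt k := by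
    intro k
    simp only [hPtdef]
    rw [← mul_assoc, neg_one_zpow_mul_self, one_mul]
  rw [reverse_step m n p' Q' Pt Qt hp'Qt hQ'Pt,
    det_step m n p Q Pt Qt c d hp0 hc0 hd0 hconv hdconv,
    ← mul_assoc, sign_final]
end
end

section
/- In the determinant R_{m,n}^{(b)}, replacing every entry q_k^{(b)} of the q-block by q̃_k^{(b)} (defined by the generating function ∑ q̃_k λ^k = (−q^{1/4}b^{−1}λ, −q^{3/4}b^{−1}λ;q)_∞ / (q^{1/4}xλ, q^{3/4}x^{−1}λ;q)_∞) leaves the determinant unchanged: the modified determinant equals R_{m,n}^{(b)}. -/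
noncomputable section

open PowerSeries Finset

private lemma sum_range_two_mul_s12 {M : ℕ} (g : ℕ → ℂ) (hg : ∀ i, Odd i → g i = 0) :
    ∑ i ∈ Finset.range (2 * M), g i = ∑ t ∈ Finset.range M, g (2 * t) := by
  induction M with
  | zero => simp
  | succ M ih =>
    have h2 : 2 * (M + 1) = (2 * M) + 1 + 1 := by ring
    rw [h2, Finset.sum_range_succ, Finset.sum_range_succ, Finset.sum_range_succ, ih,
      hg (2 * M + 1) ⟨M, by ring⟩, add_zero]

private lemma seq_rel_to_ps (q : ℂ) (f : ℤ → ℂ) (hneg : ∀ k : ℤ, k < 0 → f k = 0)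
    (α β γ δ : ℂ)
    (hrec : ∀ k : ℤ, f k + α * f (k - 1) + β * f (k - 2)
      = q ^ k * f k + γ * q ^ (k - 1) * f (k - 1) + δ * q ^ (k - 2) * f (k - 2)) :
    (1 + C α * X ^ 1 + C β * X ^ 2) * PowerSeries.mk (fun j => f j)
      = (1 + C γ * X ^ 1 + C δ * X ^ 2)
          * rescale q (PowerSeries.mk (fun j => f j)) := by
  ext nn
  simp only [add_mul, one_mul, mul_assoc, map_add, coeff_C_mul, coeff_X_pow_mul',
    coeff_mk, coeff_rescale]
  match nn with
  | 0 =>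
    have h := hrec 0
    rw [show (0:ℤ) - 1 = -1 by norm_num, show (0:ℤ) - 2 = -2 by norm_num,
      hneg (-1) (by norm_num), hneg (-2) (by norm_num)] at h
    simpa [mul_assoc] using h
  | 1 =>
    have h := hrec 1
    rw [show (1:ℤ) - 2 = -1 by norm_num, show (1:ℤ) - 1 = 0 by norm_num,
      hneg (-1) (by norm_num)] at h
    simpa [mul_assoc] using h
  | (nn+2) =>
    have h := hrec ((nn : ℤ) + 2)
    have e1 : ((nn:ℤ) + 2) - 1 = ((nn + 1 : ℕ) : ℤ) := by push_cast; ring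
    have e2 : ((nn:ℤ) + 2) - 2 = ((nn : ℕ) : ℤ) := by push_cast; ring
    have e0 : ((nn:ℤ) + 2) = ((nn + 2 : ℕ) : ℤ) := by push_cast; ring
    rw [e1, e2, e0, zpow_natCast, zpow_natCast, zpow_natCast] at h
    simpa [mul_assoc] using h


-- main combinational lemma: Qt is a unitriangular combination of even shifts of Q
private lemma qt_comb (s x b : ℂ) (habs : ‖s ^ 4‖ < 1)
    (Q Qt : ℤ → ℂ) (hQ : IsQCoeff s x b Q) (hQt : IsQtCoeff s x b Qt) :
    ∃ c : ℕ → ℂ, c 0 = 1 ∧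
      ∀ (m : ℕ) (k : ℤ), k < 2 * m →
        Qt k = ∑ t ∈ Finset.range m, c t * Q (k - 2 * t) := by
  classical
  obtain ⟨hQneg, hQ0, hQrec⟩ := hQ
  obtain ⟨hQtneg, hQt0, hQtrec⟩ := hQt
  set q : ℂ := s ^ 4 with hqdef
  set A : ℂ := s * b⁻¹ + s ^ 3 * b⁻¹ with hA
  set Cc : ℂ := s * x + s ^ 3 * x⁻¹ with hCc
  set Bb : ℂ := s ^ 4 * (b⁻¹) ^ 2 with hB
  set Dd : ℂ := s ^ 4 with hD
  set F : PowerSeries ℂ := PowerSeries.mk (fun j => Q j) with hF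
  set Ft : PowerSeries ℂ := PowerSeries.mk (fun j => Qt j) with hFt
  have hps1 : (1 + C (-A) * X ^ 1 + C Bb * X ^ 2) * F
      = (1 + C Cc * X ^ 1 + C Dd * X ^ 2) * rescale q F := by
    refine seq_rel_to_ps q Q hQneg (-A) Bb Cc Dd (fun k => ?_)
    have h := hQrec k
    linear_combination h
  have hps2 : (1 + C (-Cc) * X ^ 1 + C Dd * X ^ 2) * Ft
      = (1 + C A * X ^ 1 + C Bb * X ^ 2) * rescale q Ft := by
    refine seq_rel_to_ps q Qt hQtneg (-Cc) Dd A Bb (fun k => ?_)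
    have h := hQtrec k
    linear_combination h
  -- the inverse of F
  have hc0 : constantCoeff F = (1 : ℂˣ) := by
    simp [hF, constantCoeff_mk, hQ0]
  set Gi : PowerSeries ℂ := PowerSeries.invOfUnit F 1 with hGi
  have hFinv : F * Gi = 1 := PowerSeries.mul_invOfUnit F 1 hc0
  have hρinv : rescale q F * rescale q Gi = 1 := by
    rw [← map_mul, hFinv, map_one]
  set P1 : PowerSeries ℂ := 1 + C (-A) * X ^ 1 + C Bb * X ^ 2 with hP1
  set P1m : PowerSeries ℂ := 1 + C A * X ^ 1 + C Bb * X ^ 2 with hP1m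
  set P2 : PowerSeries ℂ := 1 + C Cc * X ^ 1 + C Dd * X ^ 2 with hP2
  set P2m : PowerSeries ℂ := 1 + C (-Cc) * X ^ 1 + C Dd * X ^ 2 with hP2m
  have hstep : P1 * rescale q Gi = P2 * Gi := by
    have h1 : P1 * rescale q Gi * (F * Gi) = P2 * Gi * (rescale q F * rescale q Gi) := by
      calc P1 * rescale q Gi * (F * Gi) = (P1 * F) * (Gi * rescale q Gi) := by ring
        _ = (P2 * rescale q F) * (Gi * rescale q Gi) := by rw [hps1]
        _ = P2 * Gi * (rescale q F * rescale q Gi) := by ring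
    rwa [hFinv, hρinv, mul_one, mul_one] at h1
  set Hser : PowerSeries ℂ := Ft * Gi with hHser
  have hquartic : (P2 * P2m) * Hser = (P1 * P1m) * rescale q Hser := by
    calc (P2 * P2m) * Hser = (P2m * Ft) * (P2 * Gi) := by rw [hHser]; ring
      _ = (P1m * rescale q Ft) * (P1 * rescale q Gi) := by rw [hps2, hstep]
      _ = (P1 * P1m) * (rescale q Ft * rescale q Gi) := by ring
      _ = (P1 * P1m) * rescale q Hser := by rw [← map_mul, hHser]
  have hPP2 : P2 * P2m = 1 + C (2 * Dd - Cc ^ 2) * X ^ 2 + C (Dd ^ 2) * X ^ 4 := by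
    simp only [hP2, hP2m, map_sub, map_add, map_mul, map_pow, map_neg, map_ofNat]
    ring
  have hPP1 : P1 * P1m = 1 + C (2 * Bb - A ^ 2) * X ^ 2 + C (Bb ^ 2) * X ^ 4 := by
    simp only [hP1, hP1m, map_sub, map_add, map_mul, map_pow, map_neg, map_ofNat]
    ring
  set hco : ℕ → ℂ := fun j => coeff j Hser with hhco
  have hco_rel : ∀ j : ℕ,
      hco j + (2 * Dd - Cc ^ 2) * (if 2 ≤ j then hco (j - 2) else 0)
        + Dd ^ 2 * (if 4 ≤ j then hco (j - 4) else 0)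
      = q ^ j * hco j + (2 * Bb - A ^ 2) * q ^ (j - 2) * (if 2 ≤ j then hco (j - 2) else 0)
        + Bb ^ 2 * q ^ (j - 4) * (if 4 ≤ j then hco (j - 4) else 0) := by
    intro j
    have h := congrArg (coeff j) hquartic
    rw [hPP2, hPP1] at h
    simp only [add_mul, one_mul, mul_assoc, map_add, coeff_C_mul, coeff_X_pow_mul',
      coeff_rescale] at h
    simp only [hhco]
    split_ifs at h ⊢ <;> linear_combination h
  have hq_ne : ∀ j : ℕ, 1 ≤ j → q ^ j ≠ 1 := by
    intro j hj h1
    have h2 : ‖q ^ j‖ < 1 := by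
      rw [norm_pow]
      calc ‖q‖ ^ j ≤ ‖q‖ ^ 1 :=
            pow_le_pow_of_le_one (norm_nonneg _) habs.le hj
        _ < 1 := by simpa using habs
    rw [h1] at h2
    simp at h2
  have hodd : ∀ j : ℕ, Odd j → hco j = 0 := by
    intro j
    induction j using Nat.strong_induction_on with
    | _ j ih =>
      intro hj
      have h := hco_rel j
      have h2 : (if 2 ≤ j then hco (j - 2) else 0) = 0 := by
        split_ifs with hc
        · exact ih (j - 2) (by omega) (by rcases hj with ⟨t, ht⟩; exact ⟨t - 1, by omega⟩)
        · rfl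
      have h4 : (if 4 ≤ j then hco (j - 4) else 0) = 0 := by
        split_ifs with hc
        · exact ih (j - 4) (by omega) (by rcases hj with ⟨t, ht⟩; exact ⟨t - 2, by omega⟩)
        · rfl
      rw [h2, h4] at h
      simp only [mul_zero, add_zero] at h
      have hzero : (1 - q ^ j) * hco j = 0 := by linear_combination h
      rcases mul_eq_zero.mp hzero with h0 | h0
      · exact absurd (by linear_combination -h0) (hq_ne j hj.pos)
      · exact h0
  have hFt_eq : Ft = Hser * F := by
    have hgif : Gi * F = 1 := by rw [mul_comm]; exact hFinv
    calc Ft = Ft * (Gi * F) := by rw [hgif, mul_one]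
      _ = Hser * F := by rw [hHser]; ring
  have hco01 : hco 0 = 1 := by
    have h := congrArg (constantCoeff) hFt_eq
    rw [map_mul] at h
    have h1 : constantCoeff Ft = 1 := by simp [hFt, constantCoeff_mk, hQt0]
    have h2 : constantCoeff F = 1 := by simp [hF, constantCoeff_mk, hQ0]
    rw [h1, h2, mul_one] at h
    rw [hhco]
    simpa [coeff_zero_eq_constantCoeff] using h.symm
  have hconv : ∀ N : ℕ, Qt (N : ℤ) = ∑ i ∈ Finset.range (N + 1), hco i * Q ((N : ℤ) - i) := by
    intro N
    have h := congrArg (coeff N) hFt_eq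
    rw [hFt, hF, coeff_mk, coeff_mul, Finset.Nat.sum_antidiagonal_eq_sum_range_succ_mk] at h
    rw [h]
    refine Finset.sum_congr rfl fun i hi => ?_
    have hiN : i ≤ N := by simpa [Nat.lt_succ_iff] using hi
    have hcast : ((N - i : ℕ) : ℤ) = (N : ℤ) - i := by omega
    rw [coeff_mk, hcast]
  refine ⟨fun t => hco (2 * t), by simpa using hco01, ?_⟩
  intro m k hk
  rcases lt_or_ge k 0 with hneg | hpos
  · rw [hQtneg k hneg]
    symm
    apply Finset.sum_eq_zero
    intro t _
    rw [hQneg (k - 2 * t) (by have := Int.natCast_nonneg t; omega), mul_zero]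
  · lift k to ℕ using hpos with N
    have hN : N + 1 ≤ 2 * m := by omega
    rw [hconv N]
    have e1 : ∑ i ∈ Finset.range (N + 1), hco i * Q ((N : ℤ) - i)
        = ∑ i ∈ Finset.range (2 * m), hco i * Q ((N : ℤ) - i) := by
      apply Finset.sum_subset (Finset.range_subset_range.2 hN)
      intro i _ hi
      rw [Finset.mem_range, not_lt] at hi
      rw [hQneg ((N : ℤ) - i) (by omega), mul_zero]
    rw [e1, sum_range_two_mul_s12 _ (fun i hi => by rw [hodd i hi, zero_mul])]
    refine Finset.sum_congr rfl fun t _ => ?_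
    have hcast2 : ((2 * t : ℕ) : ℤ) = 2 * (t : ℤ) := by push_cast; ring
    rw [hcast2]

/-- Replacing every entry `q_k^{(b)}` of the `q`-block of `R_{m,n}^{(b)}` by `q̃_k^{(b)}`
leaves the determinant unchanged. -/
theorem Rdet_qtilde_replacement (s x b : ℂ) (hs : s ≠ 0) (hx : x ≠ 0) (hb : b ≠ 0)
    (habs : ‖s ^ 4‖ < 1) (m n : ℕ) (p Q Qt : ℤ → ℂ)
    (hp : IsPCoeff s x b p) (hQ : IsQCoeff s x b Q) (hQt : IsQtCoeff s x b Qt) :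
    Rdet m n p Qt = Rdet m n p Q := by
  classical
  obtain ⟨c, hc0, hmain⟩ := qt_comb s x b habs Q Qt hQ hQt
  have hQneg := hQ.1
  -- the triangular matrix
  set L : Matrix (Fin (m + n)) (Fin (m + n)) ℂ := fun i j =>
    if (i : ℕ) < m then (if (j : ℕ) ≤ (i : ℕ) then c ((i : ℕ) - (j : ℕ)) else 0)
    else (if j = i then 1 else 0) with hL
  set MQ : Matrix (Fin (m + n)) (Fin (m + n)) ℂ := Matrix.of fun i j : Fin (m + n) =>
    if (i : ℕ) < m then Q (2 * ((i : ℕ) : ℤ) - ((j : ℕ) : ℤ) + 1)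
    else p ((n : ℤ) + (m : ℤ) + ((j : ℕ) : ℤ) - 2 * ((i : ℕ) : ℤ)) with hMQ
  set MQt : Matrix (Fin (m + n)) (Fin (m + n)) ℂ := Matrix.of fun i j : Fin (m + n) =>
    if (i : ℕ) < m then Qt (2 * ((i : ℕ) : ℤ) - ((j : ℕ) : ℤ) + 1)
    else p ((n : ℤ) + (m : ℤ) + ((j : ℕ) : ℤ) - 2 * ((i : ℕ) : ℤ)) with hMQt
  have hLtri : L.BlockTriangular OrderDual.toDual := by
    intro i j hij
    have hij' : i < j := hij
    have hij2 : (i : ℕ) < (j : ℕ) := hij'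
    rw [hL]
    by_cases him : (i : ℕ) < m
    · simp [him, Nat.not_le.mpr hij2]
    · simp [him, Fin.ext_iff, Nat.ne_of_gt hij2]
  have hLdet : L.det = 1 := by
    rw [Matrix.det_of_lowerTriangular L hLtri]
    apply Finset.prod_eq_one
    intro i _
    by_cases him : (i : ℕ) < m <;> simp [hL, him, hc0]
  have hLM : L * MQ = MQt := by
    ext i j
    rw [Matrix.mul_apply]
    by_cases him : (i : ℕ) < m
    · have hentry : ∀ v : Fin (m + n), L i v * MQ v j
          = (fun w : ℕ => (if w < m then (if w ≤ (i : ℕ) then c ((i : ℕ) - w) else 0)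
              * Q (2 * (w : ℤ) - ((j : ℕ) : ℤ) + 1) else 0)) (v : ℕ) := by
        intro v
        by_cases hvm : (v : ℕ) < m
        · simp [hL, hMQ, him, hvm]
        · have hle : ¬ ((v : ℕ) ≤ (i : ℕ)) := by omega
          have hvi : v ≠ i := by intro hh; subst hh; omega
          have hle' : ¬ (v ≤ i) := fun hh => hle hh
          simp [hL, hMQ, him, hvm, hvi, hle']
      have hfin : ∑ v : Fin (m + n), L i v * MQ v j
          = ∑ w ∈ Finset.range (m + n),
              (if w < m then (if w ≤ (i : ℕ) then c ((i : ℕ) - w) else 0)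
                * Q (2 * (w : ℤ) - ((j : ℕ) : ℤ) + 1) else 0) := by
        rw [← Fin.sum_univ_eq_sum_range]
        exact Finset.sum_congr rfl fun v _ => hentry v
      rw [hfin]
      have hsub1 : ∑ w ∈ Finset.range (m + n),
            (if w < m then (if w ≤ (i : ℕ) then c ((i : ℕ) - w) else 0)
              * Q (2 * (w : ℤ) - ((j : ℕ) : ℤ) + 1) else 0)
          = ∑ w ∈ Finset.range ((i : ℕ) + 1),
            c ((i : ℕ) - w) * Q (2 * (w : ℤ) - ((j : ℕ) : ℤ) + 1) := by
        rw [← Finset.sum_subset (Finset.range_subset_range.2 (by omega : (i : ℕ) + 1 ≤ m + n))]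
        · apply Finset.sum_congr rfl
          intro w hw
          have hwi : w ≤ (i : ℕ) := by simpa [Nat.lt_succ_iff] using hw
          have : w < m := by omega
          simp [this, hwi]
        · intro w _ hw
          have hwi : ¬ (w ≤ (i : ℕ)) := by simpa [Nat.lt_succ_iff] using hw
          by_cases hwm : w < m <;> simp [hwm, hwi]
      rw [hsub1]
      have hrefl := Finset.sum_range_reflect
        (fun w => c ((i : ℕ) - w) * Q (2 * (w : ℤ) - ((j : ℕ) : ℤ) + 1)) ((i : ℕ) + 1)
      rw [← hrefl]
      have hsub2 : ∑ t ∈ Finset.range ((i : ℕ) + 1),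
            c ((i : ℕ) - ((i : ℕ) + 1 - 1 - t))
              * Q (2 * ((((i : ℕ) + 1 - 1 - t : ℕ)) : ℤ) - ((j : ℕ) : ℤ) + 1)
          = ∑ t ∈ Finset.range ((i : ℕ) + 1),
            c t * Q ((2 * ((i : ℕ) : ℤ) - ((j : ℕ) : ℤ) + 1) - 2 * t) := by
        apply Finset.sum_congr rfl
        intro t ht
        have hti : t ≤ (i : ℕ) := by simpa [Nat.lt_succ_iff] using ht
        have e1 : (i : ℕ) - ((i : ℕ) + 1 - 1 - t) = t := by omega
        have e2 : ((((i : ℕ) + 1 - 1 - t : ℕ)) : ℤ) = ((i : ℕ) : ℤ) - t := by omega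
        rw [e1, e2]
        ring_nf
      rw [hsub2]
      have hsub3 : ∑ t ∈ Finset.range ((i : ℕ) + 1),
            c t * Q ((2 * ((i : ℕ) : ℤ) - ((j : ℕ) : ℤ) + 1) - 2 * t)
          = ∑ t ∈ Finset.range m,
            c t * Q ((2 * ((i : ℕ) : ℤ) - ((j : ℕ) : ℤ) + 1) - 2 * t) := by
        apply Finset.sum_subset (Finset.range_subset_range.2 (by omega : (i : ℕ) + 1 ≤ m))
        intro t _ ht
        have hti : (i : ℕ) < t := by simpa [Nat.lt_succ_iff] using ht
        rw [hQneg _ (by omega), mul_zero]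
      rw [hsub3, ← hmain m (2 * ((i : ℕ) : ℤ) - ((j : ℕ) : ℤ) + 1) (by omega)]
      simp [hMQt, him]
    · have hentry : ∀ v : Fin (m + n), L i v * MQ v j
          = (fun w : ℕ => (if w = (i : ℕ) then
              (if w < m then Q (2 * (w : ℤ) - ((j : ℕ) : ℤ) + 1)
                else p ((n : ℤ) + (m : ℤ) + ((j : ℕ) : ℤ) - 2 * (w : ℤ))) else 0)) (v : ℕ) := by
        intro v
        have : (v = i) ↔ ((v : ℕ) = (i : ℕ)) := Fin.ext_iff
        by_cases hvi : (v : ℕ) = (i : ℕ)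
        · have hv : v = i := Fin.ext hvi
          subst hv
          simp [hL, hMQ, him]
        · have hv : v ≠ i := fun hh => hvi (by rw [hh])
          simp [hL, hMQ, him, hv, hvi]
      have hfin : ∑ v : Fin (m + n), L i v * MQ v j
          = ∑ w ∈ Finset.range (m + n),
              (if w = (i : ℕ) then
                (if w < m then Q (2 * (w : ℤ) - ((j : ℕ) : ℤ) + 1)
                  else p ((n : ℤ) + (m : ℤ) + ((j : ℕ) : ℤ) - 2 * (w : ℤ))) else 0) := by
        rw [← Fin.sum_univ_eq_sum_range]
        exact Finset.sum_congr rfl fun v _ => hentry v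
      rw [hfin]
      rw [Finset.sum_ite_eq' (Finset.range (m + n)) ((i : ℕ))]
      simp [Finset.mem_range, i.isLt, hMQt, him]
  have : Rdet m n p Qt = MQt.det := rfl
  rw [this, ← hLM, Matrix.det_mul, hLdet, one_mul]
  rfl
end
end

section
/- Let κ_n be the sequence determined by κ_{n+1} κ̄_{n−1} = q^{−(2n+1)/4} x^{−1} (1 − q^{2n+1}) κ_n κ̄_n with κ_0 = κ_{−1} = 1, where κ̄ denotes the substitution x ↦ q^{1/2}x. Then for n ≥ 0, κ_n = q^{−C(n+1,3) − (1/4)C(n+1,2)} x^{−C(n+1,2)} ∏_{k=1}^{n} ∏_{j=1}^{k} (1 − q^{2j−1}), where C(a,b) denotes the binomial coefficient. -/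
noncomputable section

open scoped BigOperators

def Fform (s y : ℂ) (n : ℕ) : ℂ :=
  (s ^ 4) ^ (-(Nat.choose (n + 1) 3 : ℤ)) * s ^ (-(Nat.choose (n + 1) 2 : ℤ))
    * y ^ (-(Nat.choose (n + 1) 2 : ℤ))
    * ∏ k ∈ Finset.Icc 1 n, ∏ j ∈ Finset.Icc 1 k, (1 - (s ^ 4) ^ (2 * j - 1))

def Pform (s : ℂ) (n : ℕ) : ℂ := ∏ j ∈ Finset.Icc 1 n, (1 - (s ^ 4) ^ (2 * j - 1))
def Dform (s : ℂ) (n : ℕ) : ℂ := ∏ k ∈ Finset.Icc 1 n, Pform s k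

lemma Psucc (s : ℂ) (n : ℕ) :
    Pform s (n+1) = Pform s n * (1 - (s^4)^(2*n+1)) := by
  rw [Pform, Finset.prod_Icc_succ_top (by omega), show 2*(n+1)-1 = 2*n+1 by omega]
  rfl

lemma Dsucc (s : ℂ) (n : ℕ) :
    Dform s (n+1) = Dform s n * Pform s (n+1) := by
  rw [Dform, Finset.prod_Icc_succ_top (by omega)]
  rfl

lemma Fform_eq (s y : ℂ) (n : ℕ) :
    Fform s y n = (s ^ 4) ^ (-(Nat.choose (n + 1) 3 : ℤ)) * s ^ (-(Nat.choose (n + 1) 2 : ℤ))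
      * y ^ (-(Nat.choose (n + 1) 2 : ℤ)) * Dform s n := rfl

lemma Dident (s : ℂ) (n : ℕ) :
    Dform s (n+2) * Dform s n = (1 - (s^4)^(2*n+3)) * (Dform s (n+1) * Dform s (n+1)) := by
  rw [Dsucc s (n+1), Psucc s (n+1), Dsucc s n, show 2*(n+1)+1 = 2*n+3 by omega]
  ring

lemma Fform_rec (s y : ℂ) (hs : s ≠ 0) (hy : y ≠ 0) (n : ℕ) :
    Fform s y (n+2) * Fform s (s^2*y) n
      = s ^ (-(2 * ((n : ℤ)+1) + 1)) * y⁻¹ * (1 - (s ^ 4) ^ (2 * ((n : ℤ)+1) + 1))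
          * Fform s y (n+1) * Fform s (s^2*y) (n+1) := by
  have hy2 : s^2*y ≠ 0 := mul_ne_zero (pow_ne_zero _ hs) hy
  rw [Fform_eq, Fform_eq, Fform_eq, Fform_eq]
  rw [show (-(2 * ((n : ℤ)+1) + 1)) = -((2*n+3 : ℕ) : ℤ) by push_cast; ring]
  rw [show (2 * ((n : ℤ)+1) + 1) = ((2*n+3 : ℕ) : ℤ) by push_cast; ring]
  simp only [zpow_neg, zpow_natCast]
  field_simp
  simp only [Nat.choose_succ_succ, Nat.choose_one_right, Nat.choose_zero_right]
  linear_combination (s ^ (7 + 18*n + 20*(n.choose 2) + 8*(n.choose 3)) * y ^ (3 + 4*n + 2*(n.choose 2))) * Dident s n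

/-- Closed formula for the factor `κ_n`: with `s = q^{1/4}` and the recurrence
`κ_{n+1}(x) κ_{n−1}(q^{1/2}x) = q^{−(2n+1)/4} x⁻¹ (1 − q^{2n+1}) κ_n(x) κ_n(q^{1/2}x)`,
`κ_0 = κ_{−1} = 1`, one has for `n ≥ 0`
`κ_n = q^{−C(n+1,3) − (1/4)C(n+1,2)} x^{−C(n+1,2)} ∏_{k=1}^n ∏_{j=1}^k (1 − q^{2j−1})`. -/
theorem kappa_closed_form (s : ℂ) (hs : s ≠ 0) (habs : ‖s ^ 4‖ < 1)
    (kappa : ℤ → ℂ → ℂ)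
    (h0 : ∀ y : ℂ, kappa 0 y = 1) (hm1 : ∀ y : ℂ, kappa (-1) y = 1)
    (hrec : ∀ (n : ℤ) (y : ℂ),
      kappa (n + 1) y * kappa (n - 1) (s ^ 2 * y)
        = s ^ (-(2 * n + 1)) * y⁻¹ * (1 - (s ^ 4) ^ (2 * n + 1))
            * kappa n y * kappa n (s ^ 2 * y)) :
    ∀ (n : ℕ) (y : ℂ), y ≠ 0 →
      kappa n y
        = (s ^ 4) ^ (-(Nat.choose (n + 1) 3 : ℤ)) * s ^ (-(Nat.choose (n + 1) 2 : ℤ))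
            * y ^ (-(Nat.choose (n + 1) 2 : ℤ))
            * ∏ k ∈ Finset.Icc 1 n, ∏ j ∈ Finset.Icc 1 k, (1 - (s ^ 4) ^ (2 * j - 1)) := by
  have hq0 : (s : ℂ) ^ 4 ≠ 0 := pow_ne_zero _ hs
  have hfac : ∀ m : ℕ, m ≠ 0 → (1 : ℂ) - (s ^ 4) ^ m ≠ 0 := by
    intro m hm h
    have h1 : (s ^ 4) ^ m = 1 := by linear_combination -h
    have h2 : ‖(s ^ 4) ^ m‖ < 1 := by
      rw [norm_pow]
      exact pow_lt_one₀ (norm_nonneg _) habs hm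
    rw [h1] at h2; simp at h2
  have hP : ∀ k : ℕ, Pform s k ≠ 0 := by
    intro k
    refine Finset.prod_ne_zero_iff.mpr fun j hj => hfac _ ?_
    have : 1 ≤ j := (Finset.mem_Icc.mp hj).1
    omega
  have hD : ∀ k : ℕ, Dform s k ≠ 0 :=
    fun k => Finset.prod_ne_zero_iff.mpr fun j _ => hP j
  have hF : ∀ (k : ℕ) (y : ℂ), y ≠ 0 → Fform s y k ≠ 0 := by
    intro k y hy
    exact mul_ne_zero (mul_ne_zero (mul_ne_zero (zpow_ne_zero _ hq0) (zpow_ne_zero _ hs))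
      (zpow_ne_zero _ hy)) (hD k)
  have main : ∀ n : ℕ, (∀ y : ℂ, y ≠ 0 → kappa n y = Fform s y n)
      ∧ (∀ y : ℂ, y ≠ 0 → kappa (n + 1) y = Fform s y (n + 1)) := by
    intro n
    induction n with
    | zero =>
      constructor
      · intro y hy
        rw [Nat.cast_zero, h0]
        simp [Fform, Nat.choose]
      · intro y hy
        have hr := hrec 0 y
        norm_num [h0, hm1] at hr
        rw [Nat.cast_zero, zero_add, hr]
        simp [Fform, Finset.Icc_self, Nat.choose]
    | succ n ih =>
      obtain ⟨ih1, ih2⟩ := ih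
      refine ⟨ih2, ?_⟩
      intro y hy
      have hy2 : s ^ 2 * y ≠ 0 := mul_ne_zero (pow_ne_zero _ hs) hy
      have hr := hrec ((n : ℤ) + 1) y
      rw [show ((n : ℤ) + 1 - 1) = (n : ℤ) by ring] at hr
      rw [ih1 (s ^ 2 * y) hy2, ih2 y hy, ih2 (s ^ 2 * y) hy2] at hr
      have hrec2 := Fform_rec s y hs hy n
      have hkey := mul_right_cancel₀ (hF n (s ^ 2 * y) hy2) (hr.trans hrec2.symm)
      rw [show ((↑(n + 1) : ℤ) + 1) = ((n : ℤ) + 1 + 1) by push_cast; ring]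
      exact hkey
  intro n y hy
  exact (main n).1 y hy
end
end

section
/- The Bäcklund transformation s_i defined by s_i(a_j) = a_j a_i^{−a_{ij}} and s_i(f_j) = f_j ((a_i + f_i)/(1 + a_i f_i))^{u_{ij}}, where A = (a_{ij}) is the type A_3^{(1)} Cartan matrix and U = (u_{ij}) is the orientation matrix given in the paper, is an involution: s_i² acts as the identity on all a_j and f_j (assuming 1 + a_i f_i ≠ 0 and a_i + f_i ≠ 0). -/
noncomputable section

/-- The Bäcklund transformation `s_i` (with the type `A_3^{(1)}` Cartan matrix and the
orientation matrix of the paper) is an involution: `s_i²` is the identity on all `a_j`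
and `f_j`, provided `a_i ≠ 0`, `1 + a_i f_i ≠ 0` and `a_i + f_i ≠ 0`. -/
theorem backlund_involution (a f : ZMod 4 → ℂ) (i : ZMod 4)
    (ha : ∀ j, a j ≠ 0) (h1 : 1 + a i * f i ≠ 0) (h2 : a i + f i ≠ 0)
    (C U : ZMod 4 → ZMod 4 → ℤ)
    (hC : ∀ i' j : ZMod 4, C i' j = if j = i' then 2 else if j = i' + 2 then 0 else -1)
    (hU : ∀ i' j : ZMod 4, U i' j = if j = i' + 1 then 1 else if j = i' + 3 then -1 else 0)
    (a' f' : ZMod 4 → ℂ)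
    (ha' : ∀ j, a' j = a j * a i ^ (-(C i j)))
    (hf' : ∀ j, f' j = f j * ((a i + f i) / (1 + a i * f i)) ^ (U i j)) :
    (∀ j, a' j * a' i ^ (-(C i j)) = a j) ∧
    (∀ j, f' j * ((a' i + f' i) / (1 + a' i * f' i)) ^ (U i j) = f j) := by
  have hai := ha i
  have hCii : C i i = 2 := by rw [hC]; simp
  have hUii : U i i = 0 := by
    rw [hU]
    have h1' : i ≠ i + 1 := by
      intro h; have := add_right_cancel (a := i) (b := (0 : ZMod 4)) (c := 1)
      simp at h; exact absurd h (by decide)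
    have h3' : i ≠ i + 3 := by
      intro h; simp at h; exact absurd h (by decide)
    simp [h1', h3']
  have hai' : a' i = (a i)⁻¹ := by
    rw [ha' i, hCii]
    rw [zpow_neg, ← div_eq_mul_inv, show ((2:ℤ)) = 2 from rfl, zpow_two]
    exact div_mul_cancel_left₀ hai _
  have hfi' : f' i = f i := by
    rw [hf' i, hUii, zpow_zero, mul_one]
  constructor
  · intro j
    rw [ha' j, hai']
    rw [inv_zpow]
    rw [mul_assoc, mul_inv_cancel₀ (zpow_ne_zero _ hai), mul_one]
  · intro j
    rw [hf' j, hai', hfi']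
    have key : ((a i)⁻¹ + f i) / (1 + (a i)⁻¹ * f i) = (1 + a i * f i) / (a i + f i) := by
      have e1 : (a i)⁻¹ + f i = (1 + a i * f i) / a i := by field_simp
      have e2 : 1 + (a i)⁻¹ * f i = (a i + f i) / a i := by field_simp
      rw [e1, e2, div_div_div_cancel_right₀]
      exact hai
    rw [key]
    have hr : (a i + f i) / (1 + a i * f i) ≠ 0 := div_ne_zero h2 h1
    rw [div_zpow, div_zpow, mul_assoc]
    rw [div_mul_div_comm, mul_comm ((1 + a i * f i) ^ U i j), div_self, mul_one]
    exact mul_ne_zero (zpow_ne_zero _ h2) (zpow_ne_zero _ h1)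
end
end
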